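/- arXiv:2506.07409 — 4 statements merged into one kernel-verified Lean document; each statement's English description precedes it below -/
import Mathlib

section
/- Let H be a finite-dimensional Hopf algebra with antipode S, normalized integrals λ ∈ H* (right cointegral) and Λ ∈ H (left integral) with λ(Λ) = 1, and distinguished grouplike element α ∈ H*. Then for all a, b ∈ H: λ(S(ab)) = λ(S(b · S(S(a) ↼ α))), where x ↼ α = α(x₍₁₎) x₍₂₎. -/
/-!
STATEMENT 1 (Theorem `t:t2`(ii)):
For a finite-dimensional Hopf algebra H with antipode S, normalized integrals
λ (right cointegral) and Λ (left integral) with λ(Λ) = 1, and distinguished grouplike α ∈ H*,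
for all a, b ∈ H:  λ(S(ab)) = λ(S(b · S(S(a) ↼ α))), where x ↼ α = α(x₍₁₎)x₍₂₎.
-/

open TensorProduct

/-- The right hit action `x ↼ f = f(x₍₁₎) x₍₂₎`. -/
noncomputable def rHit (k H : Type) [Field k] [Ring H] [HopfAlgebra k H]
    (f : H →ₗ[k] k) (x : H) : H :=
  (TensorProduct.lid k H) ((TensorProduct.map f LinearMap.id) (Coalgebra.comul (R := k) x))

namespace RadfordAux
open Coalgebra HopfAlgebra
variable {k H : Type} [Field k] [Ring H] [HopfAlgebra k H]

lemma sum_counit_smul_right {a : H} {ι : Type*} (r : Coalgebra.Repr k a ι) :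
    ∑ i ∈ r.index, Coalgebra.counit (R := k) (r.left i) • r.right i = a := by
  have h := Coalgebra.rTensor_counit_comul (R := k) a
  rw [← r.eq, map_sum] at h
  have h2 := congrArg (TensorProduct.lid k H) h
  simp only [map_sum, LinearMap.rTensor_tmul, TensorProduct.lid_tmul, one_smul] at h2
  exact h2

lemma sum_counit_smul_left {a : H} {ι : Type*} (r : Coalgebra.Repr k a ι) :
    ∑ i ∈ r.index, Coalgebra.counit (R := k) (r.right i) • r.left i = a := by
  have h := Coalgebra.lTensor_counit_comul (R := k) a
  rw [← r.eq, map_sum] at h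
  have h2 := congrArg (TensorProduct.rid k H) h
  simp only [map_sum, LinearMap.lTensor_tmul, TensorProduct.rid_tmul, one_smul] at h2
  exact h2

lemma tri {M : Type*} [AddCommMonoid M] [Module k M]
    (G : H ⊗[k] (H ⊗[k] H) →ₗ[k] M) {a : H} {ι : Type*} (r : Coalgebra.Repr k a ι) :
    ∑ i ∈ r.index, ∑ j ∈ (ℛ k (r.left i)).index,
      G ((ℛ k (r.left i)).left j ⊗ₜ[k] ((ℛ k (r.left i)).right j ⊗ₜ[k] r.right i))
    = ∑ i ∈ r.index, ∑ j ∈ (ℛ k (r.right i)).index,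
      G (r.left i ⊗ₜ[k] ((ℛ k (r.right i)).left j ⊗ₜ[k] (ℛ k (r.right i)).right j)) := by
  have h := Coalgebra.sum_tmul_tmul_eq r (fun i => ℛ k (r.left i)) (fun i => ℛ k (r.right i))
  simpa [map_sum] using congrArg G h

lemma rHit_repr (f : H →ₗ[k] k) {z : H} {ι : Type*} (r : Coalgebra.Repr k z ι) :
    rHit k H f z = ∑ i ∈ r.index, f (r.left i) • r.right i := by
  rw [rHit, ← r.eq]
  simp [map_sum]

lemma rHit_sum_smul {ι : Type*} (f : H →ₗ[k] k) (s : Finset ι) (c : ι → k) (v : ι → H) :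
    rHit k H f (∑ i ∈ s, c i • v i) = ∑ i ∈ s, c i • rHit k H f (v i) := by
  simp [rHit, map_sum, map_smul]

lemma hanti_mul (S : H →ₗ[k] H) (hS : S = HopfAlgebra.antipode (R := k)) {z : H} {ι : Type*} (r : Coalgebra.Repr k z ι) :
    ∑ i ∈ r.index, S (r.left i) * r.right i = Coalgebra.counit (R := k) z • (1 : H) := by
  rw [hS]; exact HopfAlgebra.sum_antipode_mul_eq_smul r

lemma hmul_anti (S : H →ₗ[k] H) (hS : S = HopfAlgebra.antipode (R := k)) {z : H} {ι : Type*} (r : Coalgebra.Repr k z ι) :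
    ∑ i ∈ r.index, r.left i * S (r.right i) = Coalgebra.counit (R := k) z • (1 : H) := by
  rw [hS]; exact HopfAlgebra.sum_mul_antipode_eq_smul r

lemma hlam_sum (lam : H →ₗ[k] k)
    (hlam : ∀ h : H,
      (TensorProduct.lid k H) ((TensorProduct.map lam LinearMap.id)
        (Coalgebra.comul (R := k) h)) = lam h • (1 : H))
    {z : H} {ι : Type*} (r : Coalgebra.Repr k z ι) :
    ∑ i ∈ r.index, lam (r.left i) • r.right i = lam z • (1 : H) := by
  have h := hlam z
  rw [← r.eq] at h
  simpa [map_sum] using h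

end RadfordAux


open RadfordAux Coalgebra in
theorem statement1
    (k H : Type) [Field k] [Ring H] [HopfAlgebra k H] [FiniteDimensional k H]
    (S : H →ₗ[k] H) (hS : S = HopfAlgebra.antipode (R := k))
    (lam : H →ₗ[k] k) (Λ : H)
    (hΛ : ∀ h : H, h * Λ = Coalgebra.counit (R := k) h • Λ)
    (hlam : ∀ h : H,
      (TensorProduct.lid k H) ((TensorProduct.map lam LinearMap.id)
        (Coalgebra.comul (R := k) h)) = lam h • (1 : H))
    (hnorm : lam Λ = 1)
    (α : H →ₗ[k] k) (hα : ∀ h : H, Λ * h = α h • Λ) :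
    ∀ a b : H, lam (S (a * b)) = lam (S (b * S (rHit k H α (S a)))) := by
  classical
  -- α is an algebra map
  have hα1 : α (1 : H) = 1 := by
    have h := congrArg lam (hα 1)
    simpa [hnorm] using h.symm
  have hαmul : ∀ x y : H, α (x * y) = α x * α y := by
    intro x y
    have h1 : Λ * (x * y) = (α x * α y) • Λ := by
      rw [← mul_assoc, hα x, smul_mul_assoc, hα y, smul_smul]
    have h2 : α (x * y) • Λ = (α x * α y) • Λ := (hα (x * y)).symm.trans h1
    have h3 := congrArg lam h2
    simpa [hnorm] using h3
  -- pull-through identities for comul Λ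
  have hL12 : ∀ x : H, comul (R := k) Λ * comul x = α x • comul (R := k) Λ := by
    intro x
    rw [← Bialgebra.comul_mul, hα, map_smul]
  have hL7 : ∀ x : H, comul x * comul (R := k) Λ
      = Coalgebra.counit (R := k) x • comul (R := k) Λ := by
    intro x
    rw [← Bialgebra.comul_mul, hΛ, map_smul]
  -- Claim C : ∑ (S h₁ ⊗ 1) Δh₂ = 1 ⊗ h
  have hClaimC : ∀ h : H, ∑ i ∈ (ℛ k h).index,
      (S ((ℛ k h).left i) ⊗ₜ[k] (1 : H)) * comul (R := k) ((ℛ k h).right i)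
      = (1 : H) ⊗ₜ[k] h := by
    intro h
    set G : H ⊗[k] (H ⊗[k] H) →ₗ[k] H ⊗[k] H :=
      ((LinearMap.mul' k H).rTensor H) ∘ₗ (TensorProduct.assoc k H H H).symm.toLinearMap
        ∘ₗ (LinearMap.rTensor (H ⊗[k] H) S) with hG
    have hGapp : ∀ x y z : H, G (x ⊗ₜ[k] (y ⊗ₜ[k] z)) = (S x * y) ⊗ₜ[k] z := by
      intro x y z
      simp [hG, TensorProduct.assoc_symm_tmul]
    have ht := tri G (ℛ k h)
    calc ∑ i ∈ (ℛ k h).index,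
          (S ((ℛ k h).left i) ⊗ₜ[k] (1 : H)) * comul (R := k) ((ℛ k h).right i)
        = ∑ i ∈ (ℛ k h).index, ∑ j ∈ (ℛ k ((ℛ k h).right i)).index,
            G ((ℛ k h).left i ⊗ₜ[k]
              ((ℛ k ((ℛ k h).right i)).left j ⊗ₜ[k] (ℛ k ((ℛ k h).right i)).right j)) := by
          refine Finset.sum_congr rfl fun i _ => ?_
          rw [← (ℛ k ((ℛ k h).right i)).eq, Finset.mul_sum]
          refine Finset.sum_congr rfl fun j _ => ?_
          rw [hGapp, Algebra.TensorProduct.tmul_mul_tmul, one_mul]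
      _ = ∑ i ∈ (ℛ k h).index, ∑ j ∈ (ℛ k ((ℛ k h).left i)).index,
            G ((ℛ k ((ℛ k h).left i)).left j ⊗ₜ[k]
              ((ℛ k ((ℛ k h).left i)).right j ⊗ₜ[k] (ℛ k h).right i)) := ht.symm
      _ = ∑ i ∈ (ℛ k h).index,
            (Coalgebra.counit (R := k) ((ℛ k h).left i) • (1 : H)) ⊗ₜ[k] (ℛ k h).right i := by
          refine Finset.sum_congr rfl fun i _ => ?_
          rw [← hanti_mul S hS (ℛ k ((ℛ k h).left i)), TensorProduct.sum_tmul]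
          refine Finset.sum_congr rfl fun j _ => ?_
          rw [hGapp]
      _ = ∑ i ∈ (ℛ k h).index,
            (1 : H) ⊗ₜ[k] (Coalgebra.counit (R := k) ((ℛ k h).left i) • (ℛ k h).right i) := by
          refine Finset.sum_congr rfl fun i _ => ?_
          rw [TensorProduct.smul_tmul]
      _ = (1 : H) ⊗ₜ[k] h := by
          rw [← TensorProduct.tmul_sum, sum_counit_smul_right (ℛ k h)]
  -- L11 : (1 ⊗ h) ΔΛ = (S h ⊗ 1) ΔΛ
  have hL11 : ∀ h : H, ((1 : H) ⊗ₜ[k] h) * comul (R := k) Λ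
      = (S h ⊗ₜ[k] (1 : H)) * comul (R := k) Λ := by
    intro h
    have h1 : S h ⊗ₜ[k] (1 : H) = ∑ i ∈ (ℛ k h).index,
        Coalgebra.counit (R := k) ((ℛ k h).right i) • (S ((ℛ k h).left i) ⊗ₜ[k] (1 : H)) := by
      conv_lhs => rw [← sum_counit_smul_left (ℛ k h)]
      rw [map_sum, TensorProduct.sum_tmul]
      refine Finset.sum_congr rfl fun i _ => ?_
      rw [map_smul, TensorProduct.smul_tmul']
    symm
    calc (S h ⊗ₜ[k] (1 : H)) * comul (R := k) Λ
        = ∑ i ∈ (ℛ k h).index, (S ((ℛ k h).left i) ⊗ₜ[k] (1 : H)) *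
            (Coalgebra.counit (R := k) ((ℛ k h).right i) • comul (R := k) Λ) := by
          rw [h1, Finset.sum_mul]
          refine Finset.sum_congr rfl fun i _ => ?_
          rw [smul_mul_assoc, mul_smul_comm]
      _ = ∑ i ∈ (ℛ k h).index, ((S ((ℛ k h).left i) ⊗ₜ[k] (1 : H)) *
            comul (R := k) ((ℛ k h).right i)) * comul (R := k) Λ := by
          refine Finset.sum_congr rfl fun i _ => ?_
          rw [← hL7, mul_assoc]
      _ = ((1 : H) ⊗ₜ[k] h) * comul (R := k) Λ := by
          rw [← Finset.sum_mul, hClaimC h]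
  -- L20 : reproduction formula
  have hM3 : ∀ x : H, ∑ i ∈ (ℛ k Λ).index,
      lam (S x * (ℛ k Λ).left i) • (ℛ k Λ).right i = x := by
    intro x
    set φ : H ⊗[k] H →ₗ[k] H :=
      (TensorProduct.lid k H).toLinearMap ∘ₗ (TensorProduct.map lam LinearMap.id) with hφ
    have hφapp : ∀ u v : H, φ (u ⊗ₜ[k] v) = lam u • v := by
      intro u v; simp [hφ]
    have h1 := congrArg φ (hL11 x)
    have hLHS : φ (((1 : H) ⊗ₜ[k] x) * comul (R := k) Λ) = x := by
      rw [← (ℛ k Λ).eq, Finset.mul_sum, map_sum]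
      calc ∑ i ∈ (ℛ k Λ).index, φ (((1:H) ⊗ₜ[k] x) * ((ℛ k Λ).left i ⊗ₜ[k] (ℛ k Λ).right i))
          = ∑ i ∈ (ℛ k Λ).index, lam ((ℛ k Λ).left i) • (x * (ℛ k Λ).right i) := by
            refine Finset.sum_congr rfl fun i _ => ?_
            rw [Algebra.TensorProduct.tmul_mul_tmul, one_mul, hφapp]
        _ = x * ∑ i ∈ (ℛ k Λ).index, lam ((ℛ k Λ).left i) • (ℛ k Λ).right i := by
            rw [Finset.mul_sum]
            refine Finset.sum_congr rfl fun i _ => ?_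
            rw [mul_smul_comm]
        _ = x := by rw [hlam_sum lam hlam (ℛ k Λ), hnorm, one_smul, mul_one]
    have hRHS : φ ((S x ⊗ₜ[k] (1 : H)) * comul (R := k) Λ)
        = ∑ i ∈ (ℛ k Λ).index, lam (S x * (ℛ k Λ).left i) • (ℛ k Λ).right i := by
      rw [← (ℛ k Λ).eq, Finset.mul_sum, map_sum]
      refine Finset.sum_congr rfl fun i _ => ?_
      rw [Algebra.TensorProduct.tmul_mul_tmul, one_mul, hφapp]
    rw [hLHS, hRHS] at h1
    exact h1.symm
  -- nondegeneracy of (x, c) ↦ lam (S x * c)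
  have hND : ∀ c c' : H, (∀ x : H, lam (S x * c) = lam (S x * c')) → c = c' := by
    have hB : ∃ B : H →ₗ[k] Module.Dual k H, ∀ x c : H, B x c = lam (S x * c) := by
      exact ⟨LinearMap.mk₂ k (fun x c => lam (S x * c))
        (fun x y c => by simp [add_mul])
        (fun t x c => by simp [smul_mul_assoc])
        (fun x c c' => by simp [mul_add])
        (fun t x c => by simp [mul_smul_comm]), fun x c => rfl⟩
    obtain ⟨B, hBdef⟩ := hB
    have hBinj : Function.Injective B := by
      rw [injective_iff_map_eq_zero]
      intro x hx
      have h0 : ∀ c : H, lam (S x * c) = 0 := by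
        intro c; rw [← hBdef, hx]; rfl
      calc x = ∑ i ∈ (ℛ k Λ).index, lam (S x * (ℛ k Λ).left i) • (ℛ k Λ).right i :=
            (hM3 x).symm
        _ = 0 := by
            refine Finset.sum_eq_zero fun i _ => ?_
            rw [h0, zero_smul]
    have hBsurj : Function.Surjective B := by
      have hfr : Module.finrank k H = Module.finrank k (Module.Dual k H) :=
        (Subspace.dual_finrank_eq).symm
      exact (LinearMap.injective_iff_surjective_of_finrank_eq_finrank hfr).mp hBinj
    intro c c' hcc
    have hdual : ∀ f : Module.Dual k H, f (c - c') = 0 := by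
      intro f
      obtain ⟨x, rfl⟩ := hBsurj f
      rw [map_sub, hBdef, hBdef, hcc, sub_self]
    have := (Module.forall_dual_apply_eq_zero_iff k (c - c')).mp hdual
    exact sub_eq_zero.mp this
  -- w = ∑ lam(S Λ₂) Λ₁ = 1
  have hw : ∑ i ∈ (ℛ k Λ).index, lam (S ((ℛ k Λ).right i)) • (ℛ k Λ).left i = (1 : H) := by
    refine hND _ _ fun x => ?_
    have h1 : lam (S x * ∑ i ∈ (ℛ k Λ).index, lam (S ((ℛ k Λ).right i)) • (ℛ k Λ).left i)
        = ∑ i ∈ (ℛ k Λ).index, lam (S x * (ℛ k Λ).left i) * lam (S ((ℛ k Λ).right i)) := by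
      rw [Finset.mul_sum, map_sum]
      refine Finset.sum_congr rfl fun i _ => ?_
      rw [mul_smul_comm, map_smul, smul_eq_mul, mul_comm]
    have h2 : lam (S x) = ∑ i ∈ (ℛ k Λ).index,
        lam (S x * (ℛ k Λ).left i) * lam (S ((ℛ k Λ).right i)) := by
      conv_lhs => rw [← hM3 x]
      rw [map_sum, map_sum]
      refine Finset.sum_congr rfl fun i _ => ?_
      rw [map_smul, map_smul, smul_eq_mul]
    rw [h1, ← h2, mul_one]
  -- KEY-L : ∑ lam (S (x Λ₂)) Λ₁ = S x
  have hM8 : ∀ x : H, ∑ i ∈ (ℛ k Λ).index,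
      lam (S (x * (ℛ k Λ).right i)) • (ℛ k Λ).left i = S x := by
    intro x
    set χ : H ⊗[k] H →ₗ[k] H :=
      (TensorProduct.rid k H).toLinearMap ∘ₗ (LinearMap.lTensor H (lam ∘ₗ S)) with hχ
    have hχapp : ∀ u v : H, χ (u ⊗ₜ[k] v) = lam (S v) • u := by
      intro u v; simp [hχ]
    have h1 := congrArg χ (hL11 x)
    have hLHS : χ (((1 : H) ⊗ₜ[k] x) * comul (R := k) Λ)
        = ∑ i ∈ (ℛ k Λ).index, lam (S (x * (ℛ k Λ).right i)) • (ℛ k Λ).left i := by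
      rw [← (ℛ k Λ).eq, Finset.mul_sum, map_sum]
      refine Finset.sum_congr rfl fun i _ => ?_
      rw [Algebra.TensorProduct.tmul_mul_tmul, one_mul, hχapp]
    have hRHS : χ ((S x ⊗ₜ[k] (1 : H)) * comul (R := k) Λ) = S x := by
      rw [← (ℛ k Λ).eq, Finset.mul_sum, map_sum]
      calc ∑ i ∈ (ℛ k Λ).index, χ ((S x ⊗ₜ[k] (1:H)) * ((ℛ k Λ).left i ⊗ₜ[k] (ℛ k Λ).right i))
          = S x * ∑ i ∈ (ℛ k Λ).index, lam (S ((ℛ k Λ).right i)) • (ℛ k Λ).left i := by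
            rw [Finset.mul_sum]
            refine Finset.sum_congr rfl fun i _ => ?_
            rw [Algebra.TensorProduct.tmul_mul_tmul, one_mul, hχapp, mul_smul_comm]
        _ = S x := by rw [hw, mul_one]
    rw [hLHS, hRHS] at h1
    exact h1
  -- hsub1 : ∑ Δ(y₁) (1 ⊗ S y₂) = y ⊗ 1
  have hsub1 : ∀ y : H, ∑ i ∈ (ℛ k y).index,
      comul (R := k) ((ℛ k y).left i) * ((1 : H) ⊗ₜ[k] S ((ℛ k y).right i))
      = y ⊗ₜ[k] (1 : H) := by
    intro y
    set G : H ⊗[k] (H ⊗[k] H) →ₗ[k] H ⊗[k] H :=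
      LinearMap.lTensor H ((LinearMap.mul' k H) ∘ₗ (LinearMap.lTensor H S)) with hG
    have hGapp : ∀ x u v : H, G (x ⊗ₜ[k] (u ⊗ₜ[k] v)) = x ⊗ₜ[k] (u * S v) := by
      intro x u v; simp [hG]
    have ht := tri G (ℛ k y)
    calc ∑ i ∈ (ℛ k y).index,
          comul (R := k) ((ℛ k y).left i) * ((1 : H) ⊗ₜ[k] S ((ℛ k y).right i))
        = ∑ i ∈ (ℛ k y).index, ∑ j ∈ (ℛ k ((ℛ k y).left i)).index,
            G ((ℛ k ((ℛ k y).left i)).left j ⊗ₜ[k]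
              ((ℛ k ((ℛ k y).left i)).right j ⊗ₜ[k] (ℛ k y).right i)) := by
          refine Finset.sum_congr rfl fun i _ => ?_
          rw [← (ℛ k ((ℛ k y).left i)).eq, Finset.sum_mul]
          refine Finset.sum_congr rfl fun j _ => ?_
          rw [hGapp, Algebra.TensorProduct.tmul_mul_tmul, mul_one]
      _ = ∑ i ∈ (ℛ k y).index, ∑ j ∈ (ℛ k ((ℛ k y).right i)).index,
            G ((ℛ k y).left i ⊗ₜ[k]
              ((ℛ k ((ℛ k y).right i)).left j ⊗ₜ[k] (ℛ k ((ℛ k y).right i)).right j)) := ht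
      _ = ∑ i ∈ (ℛ k y).index,
            (ℛ k y).left i ⊗ₜ[k] (Coalgebra.counit (R := k) ((ℛ k y).right i) • (1 : H)) := by
          refine Finset.sum_congr rfl fun i _ => ?_
          rw [← hmul_anti S hS (ℛ k ((ℛ k y).right i)), TensorProduct.tmul_sum]
          exact Finset.sum_congr rfl fun j _ => by rw [hGapp]
      _ = ∑ i ∈ (ℛ k y).index,
            (Coalgebra.counit (R := k) ((ℛ k y).right i) • (ℛ k y).left i) ⊗ₜ[k] (1 : H) := by
          refine Finset.sum_congr rfl fun i _ => ?_
          rw [TensorProduct.tmul_smul, TensorProduct.smul_tmul']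
      _ = y ⊗ₜ[k] (1 : H) := by
          rw [← TensorProduct.sum_tmul, sum_counit_smul_left (ℛ k y)]
  -- hL5 : ΔΛ (1 ⊗ S g) = ∑ α(S g₁) • ΔΛ (g₂ ⊗ 1)
  have hL5 : ∀ g : H, comul (R := k) Λ * ((1 : H) ⊗ₜ[k] S g)
      = ∑ j ∈ (ℛ k g).index, α (S ((ℛ k g).left j)) •
          (comul (R := k) Λ * ((ℛ k g).right j ⊗ₜ[k] (1 : H))) := by
    intro g
    set Ψ : H →ₗ[k] H ⊗[k] H :=
      LinearMap.mulLeft k (comul (R := k) Λ) ∘ₗ (TensorProduct.mk k H H 1 ∘ₗ S) with hΨ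
    have hΨapp : ∀ v : H, Ψ v = comul (R := k) Λ * ((1 : H) ⊗ₜ[k] S v) := by
      intro v; simp [hΨ]
    set G : H ⊗[k] (H ⊗[k] H) →ₗ[k] H ⊗[k] H :=
      (TensorProduct.lid k (H ⊗[k] H)).toLinearMap ∘ₗ
        TensorProduct.map (α ∘ₗ S)
          ((TensorProduct.lid k (H ⊗[k] H)).toLinearMap ∘ₗ TensorProduct.map α Ψ) with hG
    have hGapp : ∀ x u v : H, G (x ⊗ₜ[k] (u ⊗ₜ[k] v))
        = α (S x) • (α u • (comul (R := k) Λ * ((1 : H) ⊗ₜ[k] S v))) := by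
      intro x u v; simp [hG, hΨapp, smul_smul, mul_comm]
    have ht := tri G (ℛ k g)
    symm
    calc ∑ j ∈ (ℛ k g).index, α (S ((ℛ k g).left j)) •
            (comul (R := k) Λ * ((ℛ k g).right j ⊗ₜ[k] (1 : H)))
        = ∑ j ∈ (ℛ k g).index, ∑ l ∈ (ℛ k ((ℛ k g).right j)).index,
            G ((ℛ k g).left j ⊗ₜ[k]
              ((ℛ k ((ℛ k g).right j)).left l ⊗ₜ[k] (ℛ k ((ℛ k g).right j)).right l)) := by
          refine Finset.sum_congr rfl fun j _ => ?_
          rw [← hsub1 ((ℛ k g).right j), Finset.mul_sum, Finset.smul_sum]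
          refine Finset.sum_congr rfl fun l _ => ?_
          rw [hGapp, ← mul_assoc, hL12, smul_mul_assoc]
      _ = ∑ j ∈ (ℛ k g).index, ∑ l ∈ (ℛ k ((ℛ k g).left j)).index,
            G ((ℛ k ((ℛ k g).left j)).left l ⊗ₜ[k]
              ((ℛ k ((ℛ k g).left j)).right l ⊗ₜ[k] (ℛ k g).right j)) := ht.symm
      _ = ∑ j ∈ (ℛ k g).index, Coalgebra.counit (R := k) ((ℛ k g).left j) •
            (comul (R := k) Λ * ((1 : H) ⊗ₜ[k] S ((ℛ k g).right j))) := by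
          refine Finset.sum_congr rfl fun j _ => ?_
          have hinner : ∑ l ∈ (ℛ k ((ℛ k g).left j)).index,
              α (S ((ℛ k ((ℛ k g).left j)).left l)) * α ((ℛ k ((ℛ k g).left j)).right l)
              = Coalgebra.counit (R := k) ((ℛ k g).left j) := by
            calc ∑ l ∈ (ℛ k ((ℛ k g).left j)).index,
                  α (S ((ℛ k ((ℛ k g).left j)).left l)) * α ((ℛ k ((ℛ k g).left j)).right l)
                = α (∑ l ∈ (ℛ k ((ℛ k g).left j)).index,
                    S ((ℛ k ((ℛ k g).left j)).left l) * (ℛ k ((ℛ k g).left j)).right l) := by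
                  rw [map_sum]
                  exact Finset.sum_congr rfl fun l _ => (hαmul _ _).symm
              _ = Coalgebra.counit (R := k) ((ℛ k g).left j) := by
                  rw [hanti_mul S hS (ℛ k ((ℛ k g).left j)), map_smul, hα1,
                    smul_eq_mul, mul_one]
          rw [← hinner, Finset.sum_smul]
          refine Finset.sum_congr rfl fun l _ => ?_
          rw [hGapp, smul_smul]
      _ = comul (R := k) Λ * ((1 : H) ⊗ₜ[k]
            S (∑ j ∈ (ℛ k g).index,
              Coalgebra.counit (R := k) ((ℛ k g).left j) • (ℛ k g).right j)) := by
          rw [map_sum, TensorProduct.tmul_sum, Finset.mul_sum]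
          refine Finset.sum_congr rfl fun j _ => ?_
          rw [map_smul, TensorProduct.tmul_smul, mul_smul_comm]
      _ = comul (R := k) Λ * ((1 : H) ⊗ₜ[k] S g) := by
          rw [sum_counit_smul_right (ℛ k g)]
  -- KEY-R : ∑ lam (S (Λ₂ S u)) Λ₁ = u ↼ (α∘S)
  have hM9 : ∀ u : H, ∑ i ∈ (ℛ k Λ).index,
      lam (S ((ℛ k Λ).right i * S u)) • (ℛ k Λ).left i = rHit k H (α ∘ₗ S) u := by
    intro u
    set χ : H ⊗[k] H →ₗ[k] H :=
      (TensorProduct.rid k H).toLinearMap ∘ₗ (LinearMap.lTensor H (lam ∘ₗ S)) with hχ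
    have hχapp : ∀ x v : H, χ (x ⊗ₜ[k] v) = lam (S v) • x := by
      intro x v; simp [hχ]
    have hχright : ∀ c : H, χ (comul (R := k) Λ * (c ⊗ₜ[k] (1 : H))) = c := by
      intro c
      rw [← (ℛ k Λ).eq, Finset.sum_mul, map_sum]
      calc ∑ i ∈ (ℛ k Λ).index, χ (((ℛ k Λ).left i ⊗ₜ[k] (ℛ k Λ).right i) * (c ⊗ₜ[k] (1:H)))
          = (∑ i ∈ (ℛ k Λ).index, lam (S ((ℛ k Λ).right i)) • (ℛ k Λ).left i) * c := by
            rw [Finset.sum_mul]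
            refine Finset.sum_congr rfl fun i _ => ?_
            rw [Algebra.TensorProduct.tmul_mul_tmul, mul_one, hχapp, smul_mul_assoc]
        _ = c := by rw [hw, one_mul]
    have h1 := congrArg χ (hL5 u)
    have hLHS : χ (comul (R := k) Λ * ((1 : H) ⊗ₜ[k] S u))
        = ∑ i ∈ (ℛ k Λ).index, lam (S ((ℛ k Λ).right i * S u)) • (ℛ k Λ).left i := by
      rw [← (ℛ k Λ).eq, Finset.sum_mul, map_sum]
      refine Finset.sum_congr rfl fun i _ => ?_
      rw [Algebra.TensorProduct.tmul_mul_tmul, mul_one, hχapp]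
    have hRHS : χ (∑ j ∈ (ℛ k u).index, α (S ((ℛ k u).left j)) •
          (comul (R := k) Λ * ((ℛ k u).right j ⊗ₜ[k] (1 : H))))
        = rHit k H (α ∘ₗ S) u := by
      rw [map_sum, rHit_repr (α ∘ₗ S) (ℛ k u)]
      refine Finset.sum_congr rfl fun j _ => ?_
      rw [map_smul, hχright]
      rfl
    rw [hLHS, hRHS] at h1
    exact h1
  -- (↼ (α∘S)) is a left inverse of (↼ α)
  have hM5 : ∀ y : H, rHit k H (α ∘ₗ S) (rHit k H α y) = y := by
    intro y
    set G : H ⊗[k] (H ⊗[k] H) →ₗ[k] H :=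
      (TensorProduct.lid k H).toLinearMap ∘ₗ
        TensorProduct.map α
          ((TensorProduct.lid k H).toLinearMap ∘ₗ TensorProduct.map (α ∘ₗ S) LinearMap.id)
      with hG
    have hGapp : ∀ x u v : H, G (x ⊗ₜ[k] (u ⊗ₜ[k] v)) = (α x * α (S u)) • v := by
      intro x u v; simp [hG, smul_smul, mul_comm]
    have ht := tri G (ℛ k y)
    calc rHit k H (α ∘ₗ S) (rHit k H α y)
        = ∑ i ∈ (ℛ k y).index, α ((ℛ k y).left i) • rHit k H (α ∘ₗ S) ((ℛ k y).right i) := by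
          rw [rHit_repr α (ℛ k y), rHit_sum_smul]
      _ = ∑ i ∈ (ℛ k y).index, ∑ j ∈ (ℛ k ((ℛ k y).right i)).index,
            G ((ℛ k y).left i ⊗ₜ[k]
              ((ℛ k ((ℛ k y).right i)).left j ⊗ₜ[k] (ℛ k ((ℛ k y).right i)).right j)) := by
          refine Finset.sum_congr rfl fun i _ => ?_
          rw [rHit_repr (α ∘ₗ S) (ℛ k ((ℛ k y).right i)), Finset.smul_sum]
          refine Finset.sum_congr rfl fun j _ => ?_
          rw [hGapp, LinearMap.comp_apply, ← smul_smul]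
      _ = ∑ i ∈ (ℛ k y).index, ∑ j ∈ (ℛ k ((ℛ k y).left i)).index,
            G ((ℛ k ((ℛ k y).left i)).left j ⊗ₜ[k]
              ((ℛ k ((ℛ k y).left i)).right j ⊗ₜ[k] (ℛ k y).right i)) := ht.symm
      _ = ∑ i ∈ (ℛ k y).index, Coalgebra.counit (R := k) ((ℛ k y).left i) • (ℛ k y).right i := by
          refine Finset.sum_congr rfl fun i _ => ?_
          have hinner : ∑ j ∈ (ℛ k ((ℛ k y).left i)).index,
              α ((ℛ k ((ℛ k y).left i)).left j) * α (S ((ℛ k ((ℛ k y).left i)).right j))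
              = Coalgebra.counit (R := k) ((ℛ k y).left i) := by
            calc ∑ j ∈ (ℛ k ((ℛ k y).left i)).index,
                  α ((ℛ k ((ℛ k y).left i)).left j) * α (S ((ℛ k ((ℛ k y).left i)).right j))
                = α (∑ j ∈ (ℛ k ((ℛ k y).left i)).index,
                    (ℛ k ((ℛ k y).left i)).left j * S ((ℛ k ((ℛ k y).left i)).right j)) := by
                  rw [map_sum]
                  exact Finset.sum_congr rfl fun j _ => (hαmul _ _).symm
              _ = Coalgebra.counit (R := k) ((ℛ k y).left i) := by
                  rw [hmul_anti S hS (ℛ k ((ℛ k y).left i)), map_smul, hα1,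
                    smul_eq_mul, mul_one]
          rw [← hinner, Finset.sum_smul]
          exact Finset.sum_congr rfl fun j _ => by rw [hGapp]
      _ = y := sum_counit_smul_right (ℛ k y)
  -- Final assembly
  intro a b
  have hb := hM3 b
  have e1 : lam (S (a * b)) = ∑ i ∈ (ℛ k Λ).index,
      lam (S b * (ℛ k Λ).left i) * lam (S (a * (ℛ k Λ).right i)) := by
    conv_lhs => rw [← hb]
    rw [Finset.mul_sum, map_sum, map_sum]
    refine Finset.sum_congr rfl fun i _ => ?_
    rw [mul_smul_comm, map_smul, map_smul, smul_eq_mul]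
  have e2 : ∑ i ∈ (ℛ k Λ).index,
      lam (S b * (ℛ k Λ).left i) * lam (S (a * (ℛ k Λ).right i)) = lam (S b * S a) := by
    conv_rhs => rw [← hM8 a]
    rw [Finset.mul_sum, map_sum]
    refine Finset.sum_congr rfl fun i _ => ?_
    rw [mul_smul_comm, map_smul, smul_eq_mul, mul_comm]
  have e3 : lam (S b * S a) = ∑ i ∈ (ℛ k Λ).index,
      lam (S b * (ℛ k Λ).left i) * lam (S ((ℛ k Λ).right i * S (rHit k H α (S a)))) := by
    have hkey : ∑ i ∈ (ℛ k Λ).index,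
        lam (S ((ℛ k Λ).right i * S (rHit k H α (S a)))) • (ℛ k Λ).left i = S a := by
      rw [hM9 (rHit k H α (S a)), hM5 (S a)]
    conv_lhs => rw [← hkey]
    rw [Finset.mul_sum, map_sum]
    refine Finset.sum_congr rfl fun i _ => ?_
    rw [mul_smul_comm, map_smul, smul_eq_mul, mul_comm]
  have e4 : ∑ i ∈ (ℛ k Λ).index,
      lam (S b * (ℛ k Λ).left i) * lam (S ((ℛ k Λ).right i * S (rHit k H α (S a))))
      = lam (S (b * S (rHit k H α (S a)))) := by
    conv_rhs => rw [← hb]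
    rw [Finset.sum_mul, map_sum, map_sum]
    refine Finset.sum_congr rfl fun i _ => ?_
    rw [smul_mul_assoc, map_smul, map_smul, smul_eq_mul]
  rw [e1, e2, e3, e4]
end

section
/- Let H be a finite-dimensional Hopf algebra with antipode S, normalized integrals λ ∈ H* (right cointegral), Λ ∈ H (left integral) with λ(Λ) = 1, and distinguished grouplike α ∈ H*. Then for any a ∈ H and any k-linear map X : H → H, λ(S(a · X(Λ₍₁₎) · Λ₍₂₎)) = λ(S(X(Λ₍₁₎ · S(a)) · Λ₍₂₎)). -/
/-!
STATEMENT 2 (Theorem `t:t2`(vi)):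
For a finite-dimensional Hopf algebra H with antipode S, normalized integrals
λ (right cointegral), Λ (left integral), λ(Λ) = 1, and distinguished grouplike α,
for any a ∈ H and any k-linear X : H → H:
  λ(S(a · X(Λ₍₁₎) · Λ₍₂₎)) = λ(S(X(Λ₍₁₎ · S(a)) · Λ₍₂₎)).
Here `X(Λ₍₁₎)·Λ₍₂₎` is encoded as `m ∘ (X ⊗ id)` applied to `Δ(Λ)`, and
`Λ₍₁₎S(a) ⊗ Λ₍₂₎ = Δ(Λ)·(S(a) ⊗ 1)` using the ring structure of H ⊗ H.
-/

open TensorProduct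

open Coalgebra HopfAlgebra

section AuxHopf

variable {k H : Type} [Field k] [Ring H] [HopfAlgebra k H] {ι ι' : Type*}

noncomputable def reprMul {a b : H} (ra : Repr k a ι) (rb : Repr k b ι') : Repr k (a * b) (ι × ι') where
  index := ra.index ×ˢ rb.index
  left := fun p => ra.left p.1 * rb.left p.2
  right := fun p => ra.right p.1 * rb.right p.2
  eq := by
    rw [Bialgebra.comul_mul, ← ra.eq, ← rb.eq, Finset.sum_mul_sum, Finset.sum_product]
    simp [Algebra.TensorProduct.tmul_mul_tmul]

lemma counit_smul_right_sum {a : H} (r : Repr k a ι) :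
    ∑ i ∈ r.index, Coalgebra.counit (R := k) (r.left i) • r.right i = a := by
  have h := congrArg (TensorProduct.lid k H) (sum_counit_tmul_eq (R := k) r)
  simp only [map_sum, lid_tmul, one_smul] at h
  exact h

lemma counit_smul_left_sum {a : H} (r : Repr k a ι) :
    ∑ i ∈ r.index, Coalgebra.counit (R := k) (r.right i) • r.left i = a := by
  have h := congrArg (TensorProduct.rid k H) (sum_tmul_counit_eq (R := k) r)
  simp only [map_sum, rid_tmul, one_smul] at h
  exact h

lemma contr_sum {a : H} (r : Repr k a ι) (f : H →ₗ[k] k) (g : H →ₗ[k] H) :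
    ∑ i ∈ r.index, f (r.left i) • g (r.right i)
      = (TensorProduct.lid k H) ((TensorProduct.map f g) (Coalgebra.comul (R := k) a)) := by
  rw [← r.eq, map_sum, map_sum]
  simp

lemma hlam_sum (lam : H →ₗ[k] k)
    (hlam : ∀ h : H,
      (TensorProduct.lid k H) ((TensorProduct.map lam LinearMap.id)
        (Coalgebra.comul (R := k) h)) = lam h • (1 : H)) {a : H} (r : Repr k a ι) :
    ∑ i ∈ r.index, lam (r.left i) • r.right i = lam a • (1 : H) := by
  have := contr_sum r lam LinearMap.id
  simp only [LinearMap.id_coe, id_eq] at this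
  rw [this, hlam]

lemma coassoc_transport {V : Type} [AddCommMonoid V] [Module k V]
    {a : H} (r : Repr k a ι)
    (a₁ : (i : ι) → Repr k (r.left i) (H × H)) (a₂ : (i : ι) → Repr k (r.right i) (H × H))
    (T : H ⊗[k] (H ⊗[k] H) →ₗ[k] V) :
    ∑ i ∈ r.index, ∑ j ∈ (a₁ i).index,
      T ((a₁ i).left j ⊗ₜ[k] ((a₁ i).right j ⊗ₜ[k] r.right i))
    = ∑ i ∈ r.index, ∑ j ∈ (a₂ i).index,
      T (r.left i ⊗ₜ[k] ((a₂ i).left j ⊗ₜ[k] (a₂ i).right j)) := by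
  have h := congrArg T (sum_tmul_tmul_eq r a₁ a₂)
  simpa [map_sum] using h

lemma a_sum (Λ : H)
    (hΛ : ∀ h : H, h * Λ = Coalgebra.counit (R := k) h • Λ)
    (L : Repr k Λ ι) (x : H) :
    ∑ i ∈ L.index, L.left i ⊗ₜ[k] (x * L.right i)
      = ∑ i ∈ L.index, ((antipode (R := k) x) * L.left i) ⊗ₜ[k] L.right i := by
  classical
  have rx : Repr k x (H × H) := ℛ k x
  have rx1 : (j : rx.ι) → Repr k (rx.left j) (H × H) := fun j => ℛ k (rx.left j)
  have rx2 : (j : rx.ι) → Repr k (rx.right j) (H × H) := fun j => ℛ k (rx.right j)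
  set T : H ⊗[k] (H ⊗[k] H) →ₗ[k] H ⊗[k] H :=
    (∑ i ∈ L.index,
      (TensorProduct.map
        ((LinearMap.mulRight k (L.left i)) ∘ₗ (LinearMap.mul' k H) ∘ₗ
          (TensorProduct.map (antipode (R := k)) LinearMap.id))
        (LinearMap.mulRight k (L.right i)))) ∘ₗ
      (TensorProduct.assoc k H H H).symm.toLinearMap with hT
  have hTval : ∀ u v w : H, T (u ⊗ₜ[k] (v ⊗ₜ[k] w))
      = ∑ i ∈ L.index, (((antipode (R := k) u) * v) * L.left i) ⊗ₜ[k] (w * L.right i) := by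
    intro u v w
    simp [hT, LinearMap.sum_apply]
  calc
    ∑ i ∈ L.index, L.left i ⊗ₜ[k] (x * L.right i)
        = ∑ j ∈ rx.index, ∑ m ∈ (rx1 j).index,
            T ((rx1 j).left m ⊗ₜ[k] ((rx1 j).right m ⊗ₜ[k] rx.right j)) := by
          simp only [hTval]
          conv_lhs => rw [← counit_smul_right_sum rx]
          simp only [Finset.sum_mul, smul_mul_assoc, tmul_sum, tmul_smul]
          rw [Finset.sum_comm]
          refine Finset.sum_congr rfl fun j _ => ?_
          rw [Finset.sum_comm]
          refine Finset.sum_congr rfl fun i _ => ?_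
          rw [← sum_tmul, ← Finset.sum_mul, sum_antipode_mul_eq_smul (rx1 j),
            smul_mul_assoc, one_mul, smul_tmul']
    _ = ∑ j ∈ rx.index, ∑ m ∈ (rx2 j).index,
            T (rx.left j ⊗ₜ[k] ((rx2 j).left m ⊗ₜ[k] (rx2 j).right m)) :=
          coassoc_transport rx rx1 rx2 T
    _ = ∑ i ∈ L.index, ((antipode (R := k) x) * L.left i) ⊗ₜ[k] L.right i := by
          simp only [hTval]
          have step : ∀ j ∈ rx.index,
              ∑ m ∈ (rx2 j).index, ∑ i ∈ L.index,
                  (((antipode (R := k) (rx.left j)) * ((rx2 j).left m)) * L.left i)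
                    ⊗ₜ[k] ((rx2 j).right m * L.right i)
                = Coalgebra.counit (R := k) (rx.right j) •
                    ∑ i ∈ L.index,
                      ((antipode (R := k) (rx.left j)) * L.left i) ⊗ₜ[k] L.right i := by
            intro j _
            have e1 := (reprMul (rx2 j) L).eq
            have ecm : Coalgebra.comul (R := k) (rx.right j * Λ)
                = Coalgebra.counit (R := k) (rx.right j) • Coalgebra.comul (R := k) Λ := by
              rw [hΛ, map_smul]
            rw [ecm, ← L.eq] at e1
            have e2 := congrArg (TensorProduct.map
              (LinearMap.mulLeft k (antipode (R := k) (rx.left j)))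
              (LinearMap.id (R := k) (M := H))) e1
            simp only [map_sum, map_smul, map_tmul, LinearMap.mulLeft_apply,
              LinearMap.id_apply, reprMul, Finset.sum_product, mul_assoc] at e2 ⊢
            exact e2
          rw [Finset.sum_congr rfl step]
          conv_rhs => rw [← counit_smul_left_sum rx]
          simp only [map_sum, map_smul, Finset.sum_mul, smul_mul_assoc, sum_tmul, smul_tmul']
          rw [Finset.sum_comm]
          simp only [Finset.smul_sum, smul_tmul']

lemma c_sum (lam : H →ₗ[k] k)
    (hlam : ∀ h : H,
      (TensorProduct.lid k H) ((TensorProduct.map lam LinearMap.id)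
        (Coalgebra.comul (R := k) h)) = lam h • (1 : H))
    (Λ : H) (hΛ : ∀ h : H, h * Λ = Coalgebra.counit (R := k) h • Λ)
    (hnorm : lam Λ = 1) (L : Repr k Λ ι) (x : H) :
    ∑ i ∈ L.index, lam ((antipode (R := k) x) * L.left i) • L.right i = x := by
  have h := congrArg
    (fun t => TensorProduct.lid k H (TensorProduct.map lam (LinearMap.id (R := k) (M := H)) t))
    (a_sum Λ hΛ L x)
  simp only [map_sum, map_tmul, lid_tmul, LinearMap.id_apply] at h
  rw [← h]
  calc ∑ i ∈ L.index, lam (L.left i) • (x * L.right i)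
      = x * ∑ i ∈ L.index, lam (L.left i) • L.right i := by
        rw [Finset.mul_sum]; simp [mul_smul_comm]
    _ = x := by rw [hlam_sum lam hlam L, hnorm, one_smul, mul_one]

lemma S_inj (lam : H →ₗ[k] k)
    (hlam : ∀ h : H,
      (TensorProduct.lid k H) ((TensorProduct.map lam LinearMap.id)
        (Coalgebra.comul (R := k) h)) = lam h • (1 : H))
    (Λ : H) (hΛ : ∀ h : H, h * Λ = Coalgebra.counit (R := k) h • Λ)
    (hnorm : lam Λ = 1) (x : H) (hx : antipode (R := k) x = 0) : x = 0 := by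
  classical
  have L : Repr k Λ (H × H) := ℛ k Λ
  have h := c_sum lam hlam Λ hΛ hnorm L x
  rw [hx] at h
  simpa using h.symm

lemma alpha_mul (lam : H →ₗ[k] k) (Λ : H) (hnorm : lam Λ = 1)
    (α : H →ₗ[k] k) (hα : ∀ h : H, Λ * h = α h • Λ) (a b : H) :
    α (a * b) = α a * α b := by
  have h1 : Λ * (a * b) = (α a * α b) • Λ := by
    rw [← mul_assoc, hα a, smul_mul_assoc, hα b, smul_smul]
  have h2 := (hα (a * b)).symm.trans h1
  have := congrArg lam h2
  simpa [hnorm] using this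

lemma alpha_one (lam : H →ₗ[k] k) (Λ : H) (hnorm : lam Λ = 1)
    (α : H →ₗ[k] k) (hα : ∀ h : H, Λ * h = α h • Λ) : α 1 = 1 := by
  have := congrArg lam (hα 1)
  simpa [hnorm] using this.symm

/-- `raα h = α(h₁) • h₂`  -/
noncomputable def raα (α : H →ₗ[k] k) : H →ₗ[k] H :=
  (TensorProduct.lid k H).toLinearMap ∘ₗ TensorProduct.map α LinearMap.id ∘ₗ
    Coalgebra.comul (R := k)

lemma raα_sum (α : H →ₗ[k] k) {a : H} (r : Repr k a ι) :
    raα α a = ∑ i ∈ r.index, α (r.left i) • r.right i := by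
  rw [raα]
  simp only [LinearMap.coe_comp, Function.comp_apply, LinearEquiv.coe_coe, ← r.eq]
  simp [map_sum]

lemma raα_cancel (lam : H →ₗ[k] k) (Λ : H) (hnorm : lam Λ = 1)
    (α : H →ₗ[k] k) (hα : ∀ h : H, Λ * h = α h • Λ) (w : H) :
    raα (α ∘ₗ (antipode (R := k))) (raα α w) = w := by
  classical
  have r : Repr k w (H × H) := ℛ k w
  have a₁ : (i : r.ι) → Repr k (r.left i) (H × H) := fun i => ℛ k (r.left i)
  have a₂ : (i : r.ι) → Repr k (r.right i) (H × H) := fun i => ℛ k (r.right i)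
  set T : H ⊗[k] (H ⊗[k] H) →ₗ[k] H :=
    (TensorProduct.lid k H).toLinearMap ∘ₗ
      TensorProduct.map α ((TensorProduct.lid k H).toLinearMap ∘ₗ
        TensorProduct.map (α ∘ₗ (antipode (R := k))) LinearMap.id) with hT
  have hTval : ∀ u v w' : H, T (u ⊗ₜ[k] (v ⊗ₜ[k] w'))
      = α u • (α (antipode (R := k) v)) • w' := by
    intro u v w'
    simp only [hT, LinearMap.coe_comp, Function.comp_apply, LinearEquiv.coe_coe, map_tmul,
      lid_tmul, LinearMap.id_apply, map_smul]
  have key := coassoc_transport r a₁ a₂ T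
  calc raα (α ∘ₗ (antipode (R := k))) (raα α w)
      = ∑ i ∈ r.index, ∑ j ∈ (a₂ i).index,
          T (r.left i ⊗ₜ[k] ((a₂ i).left j ⊗ₜ[k] (a₂ i).right j)) := by
        rw [raα_sum α r, map_sum]
        refine Finset.sum_congr rfl fun i _ => ?_
        rw [map_smul, raα_sum _ (a₂ i), Finset.smul_sum]
        simp only [hTval, LinearMap.coe_comp, Function.comp_apply]
    _ = ∑ i ∈ r.index, ∑ j ∈ (a₁ i).index,
          T ((a₁ i).left j ⊗ₜ[k] ((a₁ i).right j ⊗ₜ[k] r.right i)) := key.symm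
    _ = w := by
        have step : ∀ i ∈ r.index,
            ∑ j ∈ (a₁ i).index,
              T ((a₁ i).left j ⊗ₜ[k] ((a₁ i).right j ⊗ₜ[k] r.right i))
            = Coalgebra.counit (R := k) (r.left i) • r.right i := by
          intro i _
          simp only [hTval, smul_smul]
          have : ∀ j ∈ (a₁ i).index,
              α ((a₁ i).left j) * α (antipode (R := k) ((a₁ i).right j))
                = α ((a₁ i).left j * antipode (R := k) ((a₁ i).right j)) :=
            fun j _ => (alpha_mul lam Λ hnorm α hα _ _).symm
          rw [Finset.sum_congr rfl fun j hj => by rw [this j hj]]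
          rw [← Finset.sum_smul, ← map_sum, sum_mul_antipode_eq_smul (a₁ i)]
          rw [map_smul, alpha_one lam Λ hnorm α hα]
          simp
        rw [Finset.sum_congr rfl step, counit_smul_right_sum r]

/-- `tw h = S(h ↼ α) = α(h₁) • S(h₂)` -/
noncomputable def tw (α : H →ₗ[k] k) : H →ₗ[k] H :=
  (antipode (R := k)) ∘ₗ raα α

lemma tw_sum (α : H →ₗ[k] k) {a : H} (r : Repr k a ι) :
    tw α a = ∑ i ∈ r.index, α (r.left i) • antipode (R := k) (r.right i) := by
  rw [tw, LinearMap.comp_apply, raα_sum α r, map_sum]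
  simp

lemma b_sum (lam : H →ₗ[k] k) (Λ : H) (hnorm : lam Λ = 1)
    (α : H →ₗ[k] k) (hα : ∀ h : H, Λ * h = α h • Λ)
    (L : Repr k Λ ι) (h : H) :
    ∑ i ∈ L.index, (L.left i * h) ⊗ₜ[k] L.right i
      = ∑ i ∈ L.index, L.left i ⊗ₜ[k] (L.right i * tw α h) := by
  classical
  have rh : Repr k h (H × H) := ℛ k h
  have rh1 : (j : rh.ι) → Repr k (rh.left j) (H × H) := fun j => ℛ k (rh.left j)
  have rh2 : (j : rh.ι) → Repr k (rh.right j) (H × H) := fun j => ℛ k (rh.right j)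
  set T : H ⊗[k] (H ⊗[k] H) →ₗ[k] H ⊗[k] H :=
    ∑ i ∈ L.index,
      (TensorProduct.map (LinearMap.mulLeft k (L.left i))
        ((LinearMap.mulLeft k (L.right i)) ∘ₗ (LinearMap.mul' k H) ∘ₗ
          (TensorProduct.map LinearMap.id (antipode (R := k))))) with hT
  have hTval : ∀ u v w : H, T (u ⊗ₜ[k] (v ⊗ₜ[k] w))
      = ∑ i ∈ L.index, (L.left i * u) ⊗ₜ[k] (L.right i * (v * antipode (R := k) w)) := by
    intro u v w
    simp [hT, LinearMap.sum_apply]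
  calc
    ∑ i ∈ L.index, (L.left i * h) ⊗ₜ[k] L.right i
        = ∑ j ∈ rh.index, ∑ m ∈ (rh2 j).index,
            T (rh.left j ⊗ₜ[k] ((rh2 j).left m ⊗ₜ[k] (rh2 j).right m)) := by
          simp only [hTval]
          conv_lhs => rw [← counit_smul_left_sum rh]
          simp only [Finset.mul_sum, mul_smul_comm, sum_tmul, smul_tmul']
          rw [Finset.sum_comm]
          refine Finset.sum_congr rfl fun j _ => ?_
          rw [Finset.sum_comm]
          refine Finset.sum_congr rfl fun i _ => ?_
          rw [← tmul_sum, ← Finset.mul_sum, sum_mul_antipode_eq_smul (rh2 j),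
            mul_smul_comm, mul_one, tmul_smul]
          rw [smul_tmul']
    _ = ∑ j ∈ rh.index, ∑ m ∈ (rh1 j).index,
            T ((rh1 j).left m ⊗ₜ[k] ((rh1 j).right m ⊗ₜ[k] rh.right j)) :=
          (coassoc_transport rh rh1 rh2 T).symm
    _ = ∑ i ∈ L.index, L.left i ⊗ₜ[k] (L.right i * tw α h) := by
          simp only [hTval]
          have step : ∀ j ∈ rh.index,
              ∑ m ∈ (rh1 j).index, ∑ i ∈ L.index,
                  (L.left i * (rh1 j).left m) ⊗ₜ[k]
                    (L.right i * ((rh1 j).right m * antipode (R := k) (rh.right j)))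
                = α (rh.left j) •
                    ∑ i ∈ L.index,
                      L.left i ⊗ₜ[k] (L.right i * antipode (R := k) (rh.right j)) := by
            intro j _
            have e1 := (reprMul L (rh1 j)).eq
            have ecm : Coalgebra.comul (R := k) (Λ * rh.left j)
                = α (rh.left j) • Coalgebra.comul (R := k) Λ := by
              rw [hα, map_smul]
            rw [ecm, ← L.eq] at e1
            have e2 := congrArg (TensorProduct.map (LinearMap.id (R := k) (M := H))
              (LinearMap.mulRight k (antipode (R := k) (rh.right j)))) e1
            simp only [map_sum, map_smul, map_tmul, LinearMap.mulRight_apply,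
              LinearMap.id_apply, reprMul, Finset.sum_product, mul_assoc] at e2 ⊢
            rw [Finset.sum_comm]
            exact e2
          rw [Finset.sum_congr rfl step]
          have : tw α h = ∑ j ∈ rh.index, α (rh.left j) • antipode (R := k) (rh.right j) :=
            tw_sum α rh
          rw [this]
          simp only [Finset.mul_sum, mul_smul_comm, tmul_sum, tmul_smul]
          rw [Finset.sum_comm]
          simp [Finset.smul_sum, smul_tmul']

lemma d_sum (lam : H →ₗ[k] k)
    (hlam : ∀ h : H,
      (TensorProduct.lid k H) ((TensorProduct.map lam LinearMap.id)
        (Coalgebra.comul (R := k) h)) = lam h • (1 : H))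
    (Λ : H) (hnorm : lam Λ = 1)
    (α : H →ₗ[k] k) (hα : ∀ h : H, Λ * h = α h • Λ)
    (L : Repr k Λ ι) (h : H) :
    ∑ i ∈ L.index, lam (L.left i * h) • L.right i = tw α h := by
  have e := congrArg
    (fun t => TensorProduct.lid k H (TensorProduct.map lam (LinearMap.id (R := k) (M := H)) t))
    (b_sum lam Λ hnorm α hα L h)
  simp only [map_sum, map_tmul, lid_tmul, LinearMap.id_apply] at e
  rw [e]
  calc ∑ i ∈ L.index, lam (L.left i) • (L.right i * tw α h)
      = (∑ i ∈ L.index, lam (L.left i) • L.right i) * tw α h := by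
        rw [Finset.sum_mul]; simp [smul_mul_assoc]
    _ = tw α h := by rw [hlam_sum lam hlam L, hnorm, one_smul, one_mul]

lemma rightnondeg (lam : H →ₗ[k] k)
    (hlam : ∀ h : H,
      (TensorProduct.lid k H) ((TensorProduct.map lam LinearMap.id)
        (Coalgebra.comul (R := k) h)) = lam h • (1 : H))
    (Λ : H) (hΛ : ∀ h : H, h * Λ = Coalgebra.counit (R := k) h • Λ)
    (hnorm : lam Λ = 1)
    (α : H →ₗ[k] k) (hα : ∀ h : H, Λ * h = α h • Λ)
    (w : H) (hw : ∀ a : H, lam (a * w) = 0) : w = 0 := by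
  classical
  have L : Repr k Λ (H × H) := ℛ k Λ
  have htw : tw α w = 0 := by
    rw [← d_sum lam hlam Λ hnorm α hα L w]
    simp [hw]
  have hra : raα α w = 0 := by
    apply S_inj lam hlam Λ hΛ hnorm
    exact htw
  have := raα_cancel lam Λ hnorm α hα w
  rw [hra, map_zero] at this
  exact this.symm

lemma e_sum (lam : H →ₗ[k] k)
    (hlam : ∀ h : H,
      (TensorProduct.lid k H) ((TensorProduct.map lam LinearMap.id)
        (Coalgebra.comul (R := k) h)) = lam h • (1 : H))
    {a b : H} (ra : Repr k a ι) (rb : Repr k b ι') :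
    ∑ i ∈ ra.index, lam (ra.left i * b) • ra.right i
      = ∑ j ∈ rb.index, lam (a * rb.left j) • antipode (R := k) (rb.right j) := by
  classical
  have rb1 : (j : rb.ι) → Repr k (rb.left j) (H × H) := fun j => ℛ k (rb.left j)
  have rb2 : (j : rb.ι) → Repr k (rb.right j) (H × H) := fun j => ℛ k (rb.right j)
  set T : H ⊗[k] (H ⊗[k] H) →ₗ[k] H :=
    ∑ i ∈ ra.index,
      (TensorProduct.lid k H).toLinearMap ∘ₗ
        (TensorProduct.map (lam ∘ₗ LinearMap.mulLeft k (ra.left i))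
          ((LinearMap.mulLeft k (ra.right i)) ∘ₗ (LinearMap.mul' k H) ∘ₗ
            (TensorProduct.map LinearMap.id (antipode (R := k))))) with hT
  have hTval : ∀ u v w : H, T (u ⊗ₜ[k] (v ⊗ₜ[k] w))
      = ∑ i ∈ ra.index,
          lam (ra.left i * u) • (ra.right i * (v * antipode (R := k) w)) := by
    intro u v w
    simp [hT, LinearMap.sum_apply]
  calc
    ∑ i ∈ ra.index, lam (ra.left i * b) • ra.right i
        = ∑ j ∈ rb.index, ∑ m ∈ (rb2 j).index,
            T (rb.left j ⊗ₜ[k] ((rb2 j).left m ⊗ₜ[k] (rb2 j).right m)) := by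
          simp only [hTval]
          conv_lhs => rw [← counit_smul_left_sum rb]
          simp only [Finset.mul_sum, mul_smul_comm, map_sum, map_smul, Finset.smul_sum,
            smul_eq_mul]
          simp only [Finset.sum_smul]
          rw [Finset.sum_comm]
          refine Finset.sum_congr rfl fun j _ => ?_
          rw [Finset.sum_comm]
          refine Finset.sum_congr rfl fun i _ => ?_
          rw [← Finset.smul_sum, ← Finset.mul_sum, sum_mul_antipode_eq_smul (rb2 j),
            mul_smul_comm, mul_one, smul_smul, mul_comm (lam (ra.left i * rb.left j))]
    _ = ∑ j ∈ rb.index, ∑ m ∈ (rb1 j).index,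
            T ((rb1 j).left m ⊗ₜ[k] ((rb1 j).right m ⊗ₜ[k] rb.right j)) :=
          (coassoc_transport rb rb1 rb2 T).symm
    _ = ∑ j ∈ rb.index, lam (a * rb.left j) • antipode (R := k) (rb.right j) := by
          simp only [hTval]
          refine Finset.sum_congr rfl fun j _ => ?_
          have e1 := hlam_sum lam hlam (reprMul ra (rb1 j))
          have e2 := congrArg (fun z => z * antipode (R := k) (rb.right j)) e1
          simp only [Finset.sum_mul, smul_mul_assoc, one_mul, reprMul,
            Finset.sum_product, mul_assoc] at e2 ⊢
          rw [Finset.sum_comm]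
          exact e2

lemma f_sum (lam : H →ₗ[k] k)
    (hlam : ∀ h : H,
      (TensorProduct.lid k H) ((TensorProduct.map lam LinearMap.id)
        (Coalgebra.comul (R := k) h)) = lam h • (1 : H))
    (Λ : H) (hΛ : ∀ h : H, h * Λ = Coalgebra.counit (R := k) h • Λ)
    (hnorm : lam Λ = 1) (L : Repr k Λ ι) (a : H) :
    ∑ i ∈ L.index, lam (a * L.left i) • antipode (R := k) (L.right i) = a := by
  classical
  have ra : Repr k a (H × H) := ℛ k a
  have h := e_sum lam hlam ra L
  rw [← h]
  have : ∀ i ∈ ra.index, lam (ra.left i * Λ) • ra.right i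
      = Coalgebra.counit (R := k) (ra.left i) • ra.right i := by
    intro i _
    rw [hΛ, map_smul, smul_eq_mul, hnorm, mul_one]
  rw [Finset.sum_congr rfl this, counit_smul_right_sum ra]

lemma f'_sum (lam : H →ₗ[k] k)
    (hlam : ∀ h : H,
      (TensorProduct.lid k H) ((TensorProduct.map lam LinearMap.id)
        (Coalgebra.comul (R := k) h)) = lam h • (1 : H))
    (Λ : H) (hΛ : ∀ h : H, h * Λ = Coalgebra.counit (R := k) h • Λ)
    (hnorm : lam Λ = 1)
    (α : H →ₗ[k] k) (hα : ∀ h : H, Λ * h = α h • Λ)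
    (L : Repr k Λ ι) (x : H) :
    ∑ i ∈ L.index, lam (antipode (R := k) (L.right i) * x) • L.left i = x := by
  classical
  have key : ∀ y : H,
      lam (y * ((∑ i ∈ L.index, lam (antipode (R := k) (L.right i) * x) • L.left i) - x))
        = 0 := by
    intro y
    have hy := f_sum lam hlam Λ hΛ hnorm L y
    have hy2 := congrArg (fun z => lam (z * x)) hy
    simp only [Finset.sum_mul, smul_mul_assoc, map_sum, map_smul, smul_eq_mul] at hy2
    -- hy2 : ∑ i, lam (y * L.left i) * lam (antipode (L.right i) * x) = lam (y * x)
    rw [mul_sub, map_sub, Finset.mul_sum, map_sum]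
    simp only [mul_smul_comm, map_smul, smul_eq_mul]
    rw [← hy2]
    rw [sub_eq_zero]
    exact Finset.sum_congr rfl fun i _ => by ring
  have := rightnondeg lam hlam Λ hΛ hnorm α hα _ key
  exact sub_eq_zero.mp this

/-- The main commutation lemma : `λ(xy) = λ(S(S(y↼α)) x)`. -/
lemma main_comm (lam : H →ₗ[k] k)
    (hlam : ∀ h : H,
      (TensorProduct.lid k H) ((TensorProduct.map lam LinearMap.id)
        (Coalgebra.comul (R := k) h)) = lam h • (1 : H))
    (Λ : H) (hΛ : ∀ h : H, h * Λ = Coalgebra.counit (R := k) h • Λ)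
    (hnorm : lam Λ = 1)
    (α : H →ₗ[k] k) (hα : ∀ h : H, Λ * h = α h • Λ)
    (x y : H) :
    lam (x * y) = lam (antipode (R := k) (tw α y) * x) := by
  classical
  have L : Repr k Λ (H × H) := ℛ k Λ
  have h1 := congrArg (fun z => lam (antipode (R := k) z * x))
    (d_sum lam hlam Λ hnorm α hα L y)
  simp only [map_sum, map_smul, Finset.sum_mul, smul_mul_assoc, smul_eq_mul] at h1
  -- h1 : ∑ i, lam (L.left i * y) * lam (antipode (L.right i) * x) = lam (antipode (tw α y) * x)
  have h2 := congrArg (fun z => lam (z * y)) (f'_sum lam hlam Λ hΛ hnorm α hα L x)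
  simp only [Finset.sum_mul, smul_mul_assoc, map_sum, map_smul, smul_eq_mul] at h2
  -- h2 : ∑ i, lam (antipode (L.right i) * x) * lam (L.left i * y) = lam (x * y)
  rw [← h1, ← h2]
  exact Finset.sum_congr rfl fun i _ => by ring

lemma sum_eps (e : H) {x : H} (r : Repr k x ι) :
    ∑ n ∈ r.index, r.left n * (antipode (R := k) (r.right n) * e)
      = Coalgebra.counit (R := k) x • e := by
  have h : ∀ n ∈ r.index, r.left n * (antipode (R := k) (r.right n) * e)
      = (r.left n * antipode (R := k) (r.right n)) * e := fun n _ => by rw [mul_assoc]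
  rw [Finset.sum_congr rfl h, ← Finset.sum_mul, sum_mul_antipode_eq_smul r,
    smul_mul_assoc, one_mul]

lemma sum_eps' (e : H) {x : H} (r : Repr k x ι) :
    ∑ n ∈ r.index, antipode (R := k) (r.left n) * (r.right n * e)
      = Coalgebra.counit (R := k) x • e := by
  have h : ∀ n ∈ r.index, antipode (R := k) (r.left n) * (r.right n * e)
      = (antipode (R := k) (r.left n) * r.right n) * e := fun n _ => by rw [mul_assoc]
  rw [Finset.sum_congr rfl h, ← Finset.sum_mul, sum_antipode_mul_eq_smul r,
    smul_mul_assoc, one_mul]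

lemma sum_comm3 {ι₁ ι₂ : Type*} {κ : ι₂ → Type*} (s₁ : Finset ι₁) (s₂ : Finset ι₂)
    (t : (j : ι₂) → Finset (κ j)) {V : Type*} [AddCommMonoid V]
    (f : ι₁ → (j : ι₂) → κ j → V) :
    ∑ i ∈ s₁, ∑ j ∈ s₂, ∑ y ∈ t j, f i j y
      = ∑ j ∈ s₂, ∑ y ∈ t j, ∑ i ∈ s₁, f i j y := by
  rw [Finset.sum_comm]
  exact Finset.sum_congr rfl fun j _ => Finset.sum_comm

lemma S_antimul (a b : H) :
    antipode (R := k) (a * b) = antipode (R := k) b * antipode (R := k) a := by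
  classical
  have ra : Repr k a (H × H) := ℛ k a
  have rb : Repr k b (H × H) := ℛ k b
  have ral : (i : ra.ι) → Repr k (ra.left i) (H × H) := fun i => ℛ k (ra.left i)
  have rar : (i : ra.ι) → Repr k (ra.right i) (H × H) := fun i => ℛ k (ra.right i)
  have rbl : (j : rb.ι) → Repr k (rb.left j) (H × H) := fun j => ℛ k (rb.left j)
  have rbr : (j : rb.ι) → Repr k (rb.right j) (H × H) := fun j => ℛ k (rb.right j)
  set Tb : H ⊗[k] (H ⊗[k] H) →ₗ[k] H :=
    ∑ i ∈ ra.index, ∑ m ∈ (rar i).index,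
      (LinearMap.mul' k H) ∘ₗ (TensorProduct.map
        ((LinearMap.mulRight k ((rar i).left m)) ∘ₗ (antipode (R := k)) ∘ₗ
          (LinearMap.mulLeft k (ra.left i)))
        ((LinearMap.mulRight k (antipode (R := k) ((rar i).right m))) ∘ₗ
          (LinearMap.mul' k H) ∘ₗ (TensorProduct.map LinearMap.id (antipode (R := k)))))
      with hTb
  have hTbval : ∀ u v w : H, Tb (u ⊗ₜ[k] (v ⊗ₜ[k] w))
      = ∑ i ∈ ra.index, ∑ m ∈ (rar i).index,
          antipode (R := k) (ra.left i * u) *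
            ((rar i).left m * (v * (antipode (R := k) w *
              antipode (R := k) ((rar i).right m)))) := by
    intro u v w
    simp only [hTb, LinearMap.sum_apply, LinearMap.coe_comp, Function.comp_apply, map_tmul,
      LinearMap.mul'_apply, LinearMap.mulLeft_apply, LinearMap.mulRight_apply,
      LinearMap.id_apply, mul_assoc]
  set Ta : H ⊗[k] (H ⊗[k] H) →ₗ[k] H :=
    ∑ j ∈ rb.index, ∑ n ∈ (rbl j).index,
      (LinearMap.mul' k H) ∘ₗ (TensorProduct.map
        ((antipode (R := k)) ∘ₗ (LinearMap.mulRight k ((rbl j).left n)))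
        ((LinearMap.mul' k H) ∘ₗ (TensorProduct.map
          (LinearMap.mulRight k ((rbl j).right n * antipode (R := k) (rb.right j)))
          (antipode (R := k)))))
      with hTa
  have hTaval : ∀ u v w : H, Ta (u ⊗ₜ[k] (v ⊗ₜ[k] w))
      = ∑ j ∈ rb.index, ∑ n ∈ (rbl j).index,
          antipode (R := k) (u * (rbl j).left n) *
            (v * ((rbl j).right n * (antipode (R := k) (rb.right j) *
              antipode (R := k) w))) := by
    intro u v w
    simp only [hTa, LinearMap.sum_apply, LinearMap.coe_comp, Function.comp_apply, map_tmul,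
      LinearMap.mul'_apply, LinearMap.mulLeft_apply, LinearMap.mulRight_apply,
      LinearMap.id_apply, mul_assoc]
  calc
    antipode (R := k) (a * b)
        = ∑ j ∈ rb.index, ∑ n ∈ (rbr j).index,
            Tb (rb.left j ⊗ₜ[k] ((rbr j).left n ⊗ₜ[k] (rbr j).right n)) := by
          simp only [hTbval]
          have step : ∀ j ∈ rb.index,
              ∑ n ∈ (rbr j).index, ∑ i ∈ ra.index, ∑ m ∈ (rar i).index,
                antipode (R := k) (ra.left i * rb.left j) *
                  ((rar i).left m * ((rbr j).left n * (antipode (R := k) ((rbr j).right n) *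
                    antipode (R := k) ((rar i).right m))))
              = ∑ i ∈ ra.index,
                  (Coalgebra.counit (R := k) (rb.right j) *
                    Coalgebra.counit (R := k) (ra.right i)) •
                    antipode (R := k) (ra.left i * rb.left j) := by
            intro j _
            rw [sum_comm3 (rbr j).index ra.index (fun i => (rar i).index) _]
            refine Finset.sum_congr rfl fun i _ => ?_
            have inner : ∀ m ∈ (rar i).index,
                ∑ n ∈ (rbr j).index,
                  antipode (R := k) (ra.left i * rb.left j) *
                    ((rar i).left m * ((rbr j).left n * (antipode (R := k) ((rbr j).right n) *
                      antipode (R := k) ((rar i).right m))))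
                = Coalgebra.counit (R := k) (rb.right j) •
                    (antipode (R := k) (ra.left i * rb.left j) *
                      ((rar i).left m * antipode (R := k) ((rar i).right m))) := by
              intro m _
              rw [← Finset.mul_sum, ← Finset.mul_sum, sum_eps _ (rbr j)]
              rw [mul_smul_comm, mul_smul_comm]
            rw [Finset.sum_congr rfl inner, ← Finset.smul_sum, ← Finset.mul_sum,
              sum_mul_antipode_eq_smul (rar i), mul_smul_comm, mul_one, smul_smul]
          rw [Finset.sum_congr rfl step]
          conv_lhs => rw [← counit_smul_left_sum ra, ← counit_smul_left_sum rb]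
          rw [Finset.sum_mul]
          simp only [smul_mul_assoc, Finset.mul_sum, mul_smul_comm, map_sum, map_smul,
            Finset.smul_sum, smul_smul]
          rw [Finset.sum_comm]
    _ = ∑ j ∈ rb.index, ∑ n ∈ (rbl j).index,
            Tb ((rbl j).left n ⊗ₜ[k] ((rbl j).right n ⊗ₜ[k] rb.right j)) :=
          (coassoc_transport rb rbl rbr Tb).symm
    _ = ∑ i ∈ ra.index, ∑ m ∈ (rar i).index,
            Ta (ra.left i ⊗ₜ[k] ((rar i).left m ⊗ₜ[k] (rar i).right m)) := by
          simp only [hTbval, hTaval]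
          calc
            ∑ j ∈ rb.index, ∑ n ∈ (rbl j).index, ∑ i ∈ ra.index, ∑ m ∈ (rar i).index,
              antipode (R := k) (ra.left i * (rbl j).left n) *
                ((rar i).left m * ((rbl j).right n * (antipode (R := k) (rb.right j) *
                  antipode (R := k) ((rar i).right m))))
                = ∑ j ∈ rb.index, ∑ i ∈ ra.index, ∑ m ∈ (rar i).index,
                    ∑ n ∈ (rbl j).index,
                    antipode (R := k) (ra.left i * (rbl j).left n) *
                      ((rar i).left m * ((rbl j).right n * (antipode (R := k) (rb.right j) *
                        antipode (R := k) ((rar i).right m)))) := by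
                  refine Finset.sum_congr rfl fun j _ => ?_
                  exact sum_comm3 (rbl j).index ra.index (fun i => (rar i).index) _
            _ = ∑ i ∈ ra.index, ∑ m ∈ (rar i).index, ∑ j ∈ rb.index,
                    ∑ n ∈ (rbl j).index,
                    antipode (R := k) (ra.left i * (rbl j).left n) *
                      ((rar i).left m * ((rbl j).right n * (antipode (R := k) (rb.right j) *
                        antipode (R := k) ((rar i).right m)))) :=
                  sum_comm3 rb.index ra.index (fun i => (rar i).index) _
    _ = ∑ i ∈ ra.index, ∑ m ∈ (ral i).index,
            Ta ((ral i).left m ⊗ₜ[k] ((ral i).right m ⊗ₜ[k] ra.right i)) :=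
          (coassoc_transport ra ral rar Ta).symm
    _ = antipode (R := k) b * antipode (R := k) a := by
          simp only [hTaval]
          have step : ∀ i ∈ ra.index,
              ∑ m ∈ (ral i).index, ∑ j ∈ rb.index, ∑ n ∈ (rbl j).index,
                antipode (R := k) ((ral i).left m * (rbl j).left n) *
                  ((ral i).right m * ((rbl j).right n * (antipode (R := k) (rb.right j) *
                    antipode (R := k) (ra.right i))))
              = ∑ j ∈ rb.index,
                  (Coalgebra.counit (R := k) (ra.left i) *
                    Coalgebra.counit (R := k) (rb.left j)) •
                    (antipode (R := k) (rb.right j) * antipode (R := k) (ra.right i)) := by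
            intro i _
            rw [sum_comm3 (ral i).index rb.index (fun j => (rbl j).index) _]
            refine Finset.sum_congr rfl fun j _ => ?_
            rw [Finset.sum_comm]
            have key := sum_eps' (antipode (R := k) (rb.right j) * antipode (R := k) (ra.right i))
              (reprMul (ral i) (rbl j))
            simp only [reprMul, Finset.sum_product, Bialgebra.counit_mul] at key
            have reassoc : ∀ m ∈ (ral i).index, ∀ n ∈ (rbl j).index,
                antipode (R := k) ((ral i).left m * (rbl j).left n) *
                  ((ral i).right m * ((rbl j).right n * (antipode (R := k) (rb.right j) *
                    antipode (R := k) (ra.right i))))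
                = antipode (R := k) ((ral i).left m * (rbl j).left n) *
                    (((ral i).right m * (rbl j).right n) * (antipode (R := k) (rb.right j) *
                      antipode (R := k) (ra.right i))) := by
              intro m _ n _; rw [mul_assoc]
            rw [Finset.sum_congr rfl fun m hm =>
              Finset.sum_congr rfl fun n hn => reassoc m hm n hn]
            exact key
          rw [Finset.sum_congr rfl step]
          conv_rhs => rw [← counit_smul_right_sum rb, ← counit_smul_right_sum ra]
          simp only [map_sum, map_smul, Finset.sum_mul, Finset.mul_sum, smul_mul_assoc,
            mul_smul_comm, Finset.smul_sum, smul_smul]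


end AuxHopf

theorem statement2
    (k H : Type) [Field k] [Ring H] [HopfAlgebra k H] [FiniteDimensional k H]
    (S : H →ₗ[k] H) (hS : S = HopfAlgebra.antipode (R := k))
    (lam : H →ₗ[k] k) (Λ : H)
    (hΛ : ∀ h : H, h * Λ = Coalgebra.counit (R := k) h • Λ)
    (hlam : ∀ h : H,
      (TensorProduct.lid k H) ((TensorProduct.map lam LinearMap.id)
        (Coalgebra.comul (R := k) h)) = lam h • (1 : H))
    (hnorm : lam Λ = 1)
    (α : H →ₗ[k] k) (hα : ∀ h : H, Λ * h = α h • Λ) :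
    ∀ (a : H) (X : H →ₗ[k] H),
      lam (S (a * (LinearMap.mul' k H ∘ₗ TensorProduct.map X LinearMap.id)
            (Coalgebra.comul (R := k) Λ))) =
      lam (S ((LinearMap.mul' k H ∘ₗ TensorProduct.map X LinearMap.id)
            ((Coalgebra.comul (R := k) Λ) * (S a ⊗ₜ[k] (1 : H))))) := by
  subst hS
  intro a X
  classical
  have L : Repr k Λ (H × H) := ℛ k Λ
  set w : H := ∑ i ∈ L.index, X (L.left i) * L.right i with hw
  have hL : (LinearMap.mul' k H ∘ₗ TensorProduct.map X LinearMap.id)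
      (Coalgebra.comul (R := k) Λ) = w := by
    rw [← L.eq]
    simp [hw]
  have hR : (LinearMap.mul' k H ∘ₗ TensorProduct.map X LinearMap.id)
      ((Coalgebra.comul (R := k) Λ) * ((antipode (R := k) a) ⊗ₜ[k] (1 : H)))
      = w * tw α (antipode (R := k) a) := by
    have e1 : (Coalgebra.comul (R := k) Λ) * ((antipode (R := k) a) ⊗ₜ[k] (1 : H))
        = ∑ i ∈ L.index, (L.left i * antipode (R := k) a) ⊗ₜ[k] L.right i := by
      rw [← L.eq, Finset.sum_mul]
      simp [Algebra.TensorProduct.tmul_mul_tmul]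
    rw [e1, b_sum lam Λ hnorm α hα L (antipode (R := k) a)]
    rw [map_sum]
    simp only [LinearMap.coe_comp, Function.comp_apply, map_tmul, LinearMap.mul'_apply,
      LinearMap.id_apply]
    rw [hw, Finset.sum_mul]
    exact Finset.sum_congr rfl fun i _ => (mul_assoc _ _ _).symm
  rw [hL, hR]
  rw [S_antimul a w, S_antimul w (tw α (antipode (R := k) a))]
  exact main_comm lam hlam Λ hΛ hnorm α hα (antipode (R := k) w) (antipode (R := k) a)
end

section
/- Let n > k > 0 be coprime integers with n − k odd, and set k₀ = (n−k−1)/2. Define a sequence (c_i)_{i=1}^{n} of integers by c_n = 0 together with the recursion (indices taken as least positive residues mod n): c_{i+k} = c_i + 1 for 1 ≤ i ≤ k₀; c_{i+k} = c_i − 1 for k₀+1 ≤ i ≤ 2k₀; and c_{ī+k} = c_i for 2k₀+1 ≤ i ≤ n. Then this recursion, together with c_n = 0, determines the sequence uniquely, and moreover c_{n−k} = c_k = 0. -/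
/-!
Read the indices in `ZMod n`. Then the three cases say `c (x + K) = c x + s x`, where the step
`s` is `+1` on `{1, …, k₀}`, `-1` on `{k₀ + 1, …, 2k₀}` and `0` elsewhere, so `∑ s = 0`.
Since `K` is a unit, `x ↦ x + K` is a single `n`-cycle: walking along it from `c_n = 0` determines
`c`, and the walk closes up because a full turn adds `∑ s = 0`. The values at `n - K` and `K`
are the third case at `i = n - K` and `i = n`.
-/

open Finset

/-- least positive residue of `a` modulo `n` (valued in {1, …, n} for n ≥ 1). -/
def lpr (a n : ℕ) : ℕ := (a + n - 1) % n + 1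

/-- the three-case recursion of Definition `d:cp` for the pair (n, K), with
`k₀ = (n − K − 1)/2`, together with the initial condition `c n = 0`. -/
def IsCSeq (n K : ℕ) (c : ℕ → ℤ) : Prop :=
  c n = 0 ∧
  (∀ i : ℕ, 1 ≤ i → i ≤ (n - K - 1) / 2 → c (i + K) = c i + 1) ∧
  (∀ i : ℕ, (n - K - 1) / 2 + 1 ≤ i → i ≤ 2 * ((n - K - 1) / 2) → c (i + K) = c i - 1) ∧
  (∀ i : ℕ, 2 * ((n - K - 1) / 2) + 1 ≤ i → i ≤ n → c (lpr (i + K) n) = c i)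

theorem lpr_eq_self {a n : ℕ} (h1 : 1 ≤ a) (h2 : a ≤ n) : lpr a n = a := by
  rw [lpr, show a + n - 1 = a - 1 + n by omega, Nat.add_mod_right, Nat.mod_eq_of_lt (by omega)]
  omega

theorem lpr_eq_lpr_of_natCast_eq {a b n : ℕ} [NeZero n] (h : (a : ZMod n) = b) :
    lpr a n = lpr b n := by
  have hn := NeZero.pos n
  rw [ZMod.natCast_eq_natCast_iff] at h
  rw [lpr, lpr, show a + n - 1 = a + (n - 1) by omega, show b + n - 1 = b + (n - 1) by omega,
    Nat.ModEq.add_right (n - 1) h]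

namespace ZMod

variable {n : ℕ} [NeZero n] {M : Type*}

theorem sum_range_natCast [AddCommMonoid M] (g : ZMod n → M) : ∑ t ∈ range n, g t = ∑ x, g x :=
  sum_nbij' (fun t => (t : ZMod n)) val (by simp) (fun x _ => mem_range.2 x.val_lt)
    (fun t ht => val_cast_of_lt (mem_range.1 ht)) (fun x _ => natCast_zmod_val x) (fun _ _ => rfl)

theorem funext_of_forall_add_eq [Add M] {u : ZMod n} (hu : IsUnit u) {s c c' : ZMod n → M}
    (h0 : c 0 = c' 0) (hc : ∀ x, c (x + u) = c x + s x) (hc' : ∀ x, c' (x + u) = c' x + s x) :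
    c = c' := by
  have orbit : ∀ j : ℕ, c (j * u) = c' (j * u) := by
    intro j
    induction j with
    | zero => simpa using h0
    | succ j ih => rw [Nat.cast_succ, add_one_mul, hc, hc', ih]
  funext x
  simpa [mul_assoc, inv_mul_of_unit u hu] using orbit (x * u⁻¹).val

theorem exists_forall_add_eq [AddCommMonoid M] {u : ZMod n} (hu : IsUnit u) {s : ZMod n → M}
    (hs : ∑ x, s x = 0) :
    ∃ c : ZMod n → M, c 0 = 0 ∧ ∀ x, c (x + u) = c x + s x := by
  set F : ℕ → M := fun j => ∑ t ∈ range j, s (t * u)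
  have hF_succ : ∀ j, F (j + 1) = F j + s (j * u) := fun j => sum_range_succ _ j
  have hF_periodic : Function.Periodic F n := by
    intro j
    induction j with
    | zero => simpa [F, sum_range_natCast (fun t => s (t * u))] using
        Equiv.sum_comp (Units.mulRight hu.unit) s |>.trans hs
    | succ j ih => rw [add_right_comm, hF_succ, hF_succ, ih, Nat.cast_add, natCast_self, add_zero]
  refine ⟨fun x => F (x * u⁻¹).val, by simp [F], fun x => ?_⟩
  have hval : ((x + u) * u⁻¹).val = ((x * u⁻¹).val + 1) % n := by
    rw [add_mul, mul_inv_of_unit u hu, ← val_natCast, Nat.cast_add, natCast_zmod_val, Nat.cast_one]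
  show F _ = F _ + s x
  rw [hval, hF_periodic.map_mod_nat, hF_succ, natCast_zmod_val, mul_assoc, inv_mul_of_unit u hu,
    mul_one]

def posRep (x : ZMod n) : ℕ := lpr x.val n

theorem posRep_mem_Icc (x : ZMod n) : x.posRep ∈ Icc 1 n := by
  have := Nat.mod_lt (x.val + n - 1) (NeZero.pos n)
  simp only [posRep, lpr, mem_Icc]
  omega

theorem natCast_posRep (x : ZMod n) : (x.posRep : ZMod n) = x := by
  have hn := NeZero.pos n
  rw [posRep, lpr, Nat.cast_add, natCast_mod, ← Nat.cast_add,
    show x.val + n - 1 + 1 = x.val + n by omega, Nat.cast_add, natCast_self, add_zero,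
    natCast_zmod_val]

theorem posRep_natCast {i : ℕ} (h1 : 1 ≤ i) (h2 : i ≤ n) : (i : ZMod n).posRep = i := by
  rw [posRep, lpr_eq_lpr_of_natCast_eq (natCast_zmod_val _), lpr_eq_self h1 h2]

theorem posRep_add_natCast (x : ZMod n) (k : ℕ) : (x + k).posRep = lpr (x.posRep + k) n :=
  lpr_eq_lpr_of_natCast_eq (by push_cast [natCast_zmod_val, natCast_posRep]; rfl)

theorem sum_posRep [AddCommMonoid M] (f : ℕ → M) :
    ∑ x : ZMod n, f x.posRep = ∑ i ∈ Icc 1 n, f i :=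
  sum_nbij' posRep (fun i => (i : ZMod n)) (fun x _ => posRep_mem_Icc x) (by simp)
    (fun x _ => natCast_posRep x) (fun i hi => posRep_natCast (mem_Icc.1 hi).1 (mem_Icc.1 hi).2)
    (fun _ _ => rfl)

end ZMod

def cStep (n K i : ℕ) : ℤ :=
  (if i ∈ Icc 1 ((n - K - 1) / 2) then 1 else 0) -
    if i ∈ Icc ((n - K - 1) / 2 + 1) (2 * ((n - K - 1) / 2)) then 1 else 0

section cStep

variable {n K i : ℕ}

theorem cStep_of_le (h1 : 1 ≤ i) (h2 : i ≤ (n - K - 1) / 2) : cStep n K i = 1 := by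
  simp [cStep, mem_Icc]; omega

theorem cStep_of_lt_of_le (h1 : (n - K - 1) / 2 < i) (h2 : i ≤ 2 * ((n - K - 1) / 2)) :
    cStep n K i = -1 := by
  simp [cStep, mem_Icc]; omega

theorem cStep_of_lt (h : 2 * ((n - K - 1) / 2) < i) : cStep n K i = 0 := by
  simp [cStep, mem_Icc]; omega

theorem sum_cStep (n K : ℕ) : ∑ i ∈ Icc 1 n, cStep n K i = 0 := by
  simp only [cStep, sum_sub_distrib, sum_boole, filter_mem_eq_inter]
  rw [inter_eq_right.2 (Icc_subset_Icc_right (by omega)),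
    inter_eq_right.2 (Icc_subset_Icc (by omega) (by omega))]
  simp; omega

end cStep

theorem isCSeq_iff_step {n K : ℕ} {c : ℕ → ℤ} :
    IsCSeq n K c ↔ c n = 0 ∧ ∀ i ∈ Icc 1 n, c (lpr (i + K) n) = c i + cStep n K i := by
  constructor
  · rintro ⟨h0, hinc, hdec, hstay⟩
    refine ⟨h0, fun i hi => ?_⟩
    rw [mem_Icc] at hi
    rcases le_or_gt i ((n - K - 1) / 2) with h | h
    · rw [lpr_eq_self (by omega) (by omega), hinc i hi.1 h, cStep_of_le hi.1 h]
    rcases le_or_gt i (2 * ((n - K - 1) / 2)) with h' | h'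
    · rw [lpr_eq_self (by omega) (by omega), hdec i h h', cStep_of_lt_of_le h h', sub_eq_add_neg]
    · rw [hstay i h' hi.2, cStep_of_lt h', add_zero]
  · rintro ⟨h0, hstep⟩
    refine ⟨h0, fun i h1 h2 => ?_, fun i h1 h2 => ?_, fun i h1 h2 => ?_⟩
    · rw [← cStep_of_le h1 h2, ← lpr_eq_self (a := i + K) (n := n) (by omega) (by omega)]
      exact hstep i (mem_Icc.2 ⟨h1, by omega⟩)
    · rw [sub_eq_add_neg, ← cStep_of_lt_of_le h1 h2,
        ← lpr_eq_self (a := i + K) (n := n) (by omega) (by omega)]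
      exact hstep i (mem_Icc.2 ⟨by omega, by omega⟩)
    · rw [hstep i (mem_Icc.2 ⟨by omega, h2⟩), cStep_of_lt h1, add_zero]

theorem isCSeq_iff_zmod {n K : ℕ} [NeZero n] {c : ℕ → ℤ} :
    IsCSeq n K c ↔ c (0 : ZMod n).posRep = 0 ∧
      ∀ x : ZMod n, c (x + K).posRep = c x.posRep + cStep n K x.posRep := by
  rw [isCSeq_iff_step, show (0 : ZMod n) = (n : ZMod n) from (ZMod.natCast_self n).symm,
    ZMod.posRep_natCast NeZero.one_le le_rfl]
  refine and_congr_right fun _ => ⟨fun h x => ?_, fun h i hi => ?_⟩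
  · rw [ZMod.posRep_add_natCast]
    exact h _ (ZMod.posRep_mem_Icc x)
  · have := h i
    rwa [ZMod.posRep_add_natCast, ZMod.posRep_natCast (mem_Icc.1 hi).1 (mem_Icc.1 hi).2] at this

theorem IsCSeq.apply_sub_eq_zero {n K : ℕ} {c : ℕ → ℤ} (hc : IsCSeq n K c) (hKn : K < n) :
    c (n - K) = 0 := by
  have := hc.2.2.2 (n - K) (by omega) (by omega)
  rwa [Nat.sub_add_cancel hKn.le, lpr_eq_self (by omega) le_rfl, hc.1, eq_comm] at this

theorem IsCSeq.apply_eq_zero {n K : ℕ} {c : ℕ → ℤ} (hc : IsCSeq n K c) (hK : 0 < K)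
    (hKn : K ≤ n) : c K = 0 := by
  have : NeZero n := ⟨by omega⟩
  have := hc.2.2.2 n (by omega) le_rfl
  rwa [lpr_eq_lpr_of_natCast_eq (by simp : ((n + K : ℕ) : ZMod n) = K), lpr_eq_self hK hKn,
    hc.1] at this

theorem statement14_general
    (n K : ℕ) (hK : 0 < K) (hKn : K < n) (hcop : Nat.Coprime n K) :
    -- existence:
    (∃ c : ℕ → ℤ, IsCSeq n K c) ∧
    -- uniqueness of the values c_1, …, c_n :
    (∀ c c' : ℕ → ℤ, IsCSeq n K c → IsCSeq n K c' →
      ∀ i : ℕ, 1 ≤ i → i ≤ n → c i = c' i) ∧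
    -- moreover c_{n−K} = c_K = 0 :
    (∀ c : ℕ → ℤ, IsCSeq n K c → c (n - K) = 0 ∧ c K = 0) := by
  have : NeZero n := ⟨by omega⟩
  have hu : IsUnit (K : ZMod n) := (ZMod.isUnit_iff_coprime K n).2 hcop.symm
  have hsum : ∑ x : ZMod n, cStep n K x.posRep = 0 := by rw [ZMod.sum_posRep, sum_cStep]
  refine ⟨?_, fun c c' hc hc' i h1 h2 => ?_,
    fun c hc => ⟨hc.apply_sub_eq_zero hKn, hc.apply_eq_zero hK hKn.le⟩⟩
  · obtain ⟨c, h0, hstep⟩ := ZMod.exists_forall_add_eq hu hsum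
    refine ⟨fun i => c i, isCSeq_iff_zmod.2 ?_⟩
    simpa only [ZMod.natCast_posRep] using ⟨h0, hstep⟩
  · obtain ⟨h0, hstep⟩ := isCSeq_iff_zmod.1 hc
    obtain ⟨h0', hstep'⟩ := isCSeq_iff_zmod.1 hc'
    have := congrFun (ZMod.funext_of_forall_add_eq (c := fun x => c x.posRep)
      (c' := fun x => c' x.posRep) hu (h0.trans h0'.symm) hstep hstep') i
    rwa [ZMod.posRep_natCast h1 h2] at this

theorem statement14
    (n K : ℕ) (hK : 0 < K) (hKn : K < n) (hcop : Nat.Coprime n K)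
    (hodd : Odd (n - K)) :
    -- existence:
    (∃ c : ℕ → ℤ, IsCSeq n K c) ∧
    -- uniqueness of the values c_1, …, c_n :
    (∀ c c' : ℕ → ℤ, IsCSeq n K c → IsCSeq n K c' →
      ∀ i : ℕ, 1 ≤ i → i ≤ n → c i = c' i) ∧
    -- moreover c_{n−K} = c_K = 0 :
    (∀ c : ℕ → ℤ, IsCSeq n K c → c (n - K) = 0 ∧ c K = 0) :=
  statement14_general n K hK hKn hcop
end

section
/- The group Γ := ⟨x, y, z ∣ x² = y^{m+1} = z^{n+1} = xyz⟩ is isomorphic to the group G := ⟨a, b ∣ a^m = bab, b^n = aba⟩ for all positive integers m, n, via the assignment y ↦ a, z ↦ b (and x ↦ ab). -/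
/-!
STATEMENT 19:
The centrally extended triangle group Γ = ⟨x, y, z ∣ x² = y^{m+1} = z^{n+1} = xyz⟩ is
isomorphic to G = ⟨a, b ∣ a^m = bab, b^n = aba⟩ for all positive integers m, n, via
y ↦ a, z ↦ b (and x ↦ ab).
-/

/-- relations of Γ(2, m+1, n+1) = ⟨x, y, z ∣ x² = xyz, y^{m+1} = xyz, z^{n+1} = xyz⟩,
with generators x = 0, y = 1, z = 2. -/
def triRels (m n : ℕ) : Set (FreeGroup (Fin 3)) :=
  { FreeGroup.of 0 ^ 2 * (FreeGroup.of 0 * FreeGroup.of 1 * FreeGroup.of 2)⁻¹,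
    FreeGroup.of 1 ^ (m + 1) * (FreeGroup.of 0 * FreeGroup.of 1 * FreeGroup.of 2)⁻¹,
    FreeGroup.of 2 ^ (n + 1) * (FreeGroup.of 0 * FreeGroup.of 1 * FreeGroup.of 2)⁻¹ }

/-- relations of G = ⟨a, b ∣ a^m = bab, b^n = aba⟩, with generators a = 0, b = 1. -/
def heegRels (m n : ℕ) : Set (FreeGroup (Fin 2)) :=
  { FreeGroup.of 0 ^ m * (FreeGroup.of 1 * FreeGroup.of 0 * FreeGroup.of 1)⁻¹,
    FreeGroup.of 1 ^ n * (FreeGroup.of 0 * FreeGroup.of 1 * FreeGroup.of 0)⁻¹ }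

/-- relations hold in the presented group -/
lemma presented_rel_eq_one {α : Type*} {rels : Set (FreeGroup α)} {r : FreeGroup α}
    (h : r ∈ rels) : PresentedGroup.mk rels r = 1 := by
  have : r ∈ Subgroup.normalClosure rels := Subgroup.subset_normalClosure h
  exact (QuotientGroup.eq_one_iff r).mpr this

theorem statement19 (m n : ℕ) (hm : 0 < m) (hn : 0 < n) :
    ∃ e : PresentedGroup (triRels m n) ≃* PresentedGroup (heegRels m n),
      e (PresentedGroup.of 1) = PresentedGroup.of 0 ∧
      e (PresentedGroup.of 2) = PresentedGroup.of 1 ∧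
      e (PresentedGroup.of 0) = PresentedGroup.of 0 * PresentedGroup.of 1 := by
  set G := PresentedGroup (heegRels m n)
  set Γ := PresentedGroup (triRels m n)
  set a : G := PresentedGroup.of 0
  set b : G := PresentedGroup.of 1
  set X : Γ := PresentedGroup.of 0
  set Y : Γ := PresentedGroup.of 1
  set Z : Γ := PresentedGroup.of 2
  -- relations in G
  have ha : a ^ m = b * a * b := by
    have := presented_rel_eq_one (rels := heegRels m n)
      (r := FreeGroup.of 0 ^ m * (FreeGroup.of 1 * FreeGroup.of 0 * FreeGroup.of 1)⁻¹)
      (by simp [heegRels])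
    simp only [map_mul, map_pow, map_inv] at this
    rw [mul_inv_eq_one] at this
    exact this
  have hb : b ^ n = a * b * a := by
    have := presented_rel_eq_one (rels := heegRels m n)
      (r := FreeGroup.of 1 ^ n * (FreeGroup.of 0 * FreeGroup.of 1 * FreeGroup.of 0)⁻¹)
      (by simp [heegRels])
    simp only [map_mul, map_pow, map_inv] at this
    rw [mul_inv_eq_one] at this
    exact this
  -- relations in Γ
  have hX2 : X ^ 2 = X * Y * Z := by
    have := presented_rel_eq_one (rels := triRels m n)
      (r := FreeGroup.of 0 ^ 2 * (FreeGroup.of 0 * FreeGroup.of 1 * FreeGroup.of 2)⁻¹)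
      (by simp [triRels])
    simp only [map_mul, map_pow, map_inv] at this
    rw [mul_inv_eq_one] at this
    exact this
  have hYr : Y ^ (m + 1) = X * Y * Z := by
    have := presented_rel_eq_one (rels := triRels m n)
      (r := FreeGroup.of 1 ^ (m + 1) * (FreeGroup.of 0 * FreeGroup.of 1 * FreeGroup.of 2)⁻¹)
      (by simp [triRels])
    simp only [map_mul, map_pow, map_inv] at this
    rw [mul_inv_eq_one] at this
    exact this
  have hZr : Z ^ (n + 1) = X * Y * Z := by
    have := presented_rel_eq_one (rels := triRels m n)
      (r := FreeGroup.of 2 ^ (n + 1) * (FreeGroup.of 0 * FreeGroup.of 1 * FreeGroup.of 2)⁻¹)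
      (by simp [triRels])
    simp only [map_mul, map_pow, map_inv] at this
    rw [mul_inv_eq_one] at this
    exact this
  have hX : X = Y * Z := by
    have h : X * X = X * (Y * Z) := by
      rw [← mul_assoc, ← hX2, sq]
    exact mul_left_cancel h
  have hY : Y ^ m = Z * Y * Z := by
    have h : Y * Y ^ m = Y * (Z * Y * Z) := by
      rw [← pow_succ', hYr, hX]; group
    exact mul_left_cancel h
  have hZ : Z ^ n = Y * Z * Y := by
    have h : Z ^ n * Z = Y * Z * Y * Z := by
      rw [← pow_succ, hZr, hX]
    exact mul_right_cancel h
  -- the forward homomorphism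
  let fmap : Fin 3 → G := ![a * b, a, b]
  have hf : ∀ r ∈ triRels m n, FreeGroup.lift fmap r = 1 := by
    intro r hr
    rcases hr with rfl | rfl | rfl
    · simp only [map_mul, map_pow, map_inv, FreeGroup.lift_apply_of, fmap]
      simp only [Matrix.cons_val_zero, Matrix.cons_val_one, Matrix.head_cons, Matrix.cons_val_two,
        Matrix.tail_cons]
      rw [sq]; group
    · simp only [map_mul, map_pow, map_inv, FreeGroup.lift_apply_of, fmap]
      simp only [Matrix.cons_val_zero, Matrix.cons_val_one, Matrix.head_cons, Matrix.cons_val_two,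
        Matrix.tail_cons]
      rw [pow_succ', ha]; group
    · simp only [map_mul, map_pow, map_inv, FreeGroup.lift_apply_of, fmap]
      simp only [Matrix.cons_val_zero, Matrix.cons_val_one, Matrix.head_cons, Matrix.cons_val_two,
        Matrix.tail_cons]
      rw [pow_succ, hb]; group
  let f : Γ →* G := PresentedGroup.toGroup hf
  -- the backward homomorphism
  let gmap : Fin 2 → Γ := ![Y, Z]
  have hg : ∀ r ∈ heegRels m n, FreeGroup.lift gmap r = 1 := by
    intro r hr
    rcases hr with rfl | rfl
    · simp only [map_mul, map_pow, map_inv, FreeGroup.lift_apply_of, gmap]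
      simp only [Matrix.cons_val_zero, Matrix.cons_val_one, Matrix.head_cons]
      rw [hY]; group
    · simp only [map_mul, map_pow, map_inv, FreeGroup.lift_apply_of, gmap]
      simp only [Matrix.cons_val_zero, Matrix.cons_val_one, Matrix.head_cons]
      rw [hZ]; group
  let g : G →* Γ := PresentedGroup.toGroup hg
  have hf0 : f X = a * b := PresentedGroup.toGroup.of hf
  have hf1 : f Y = a := PresentedGroup.toGroup.of hf
  have hf2 : f Z = b := PresentedGroup.toGroup.of hf
  have hg0 : g a = Y := PresentedGroup.toGroup.of hg
  have hg1 : g b = Z := PresentedGroup.toGroup.of hg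
  have hgf : g.comp f = MonoidHom.id Γ := by
    apply PresentedGroup.ext
    intro x
    fin_cases x
    · show g (f X) = X
      rw [hf0, map_mul, hg0, hg1, hX]
    · show g (f Y) = Y
      rw [hf1, hg0]
    · show g (f Z) = Z
      rw [hf2, hg1]
  have hfg : f.comp g = MonoidHom.id G := by
    apply PresentedGroup.ext
    intro x
    fin_cases x
    · show f (g a) = a
      rw [hg0, hf1]
    · show f (g b) = b
      rw [hg1, hf2]
  refine ⟨MonoidHom.toMulEquiv f g hgf hfg, ?_, ?_, ?_⟩
  · exact hf1
  · exact hf2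
  · rw [show (MonoidHom.toMulEquiv f g hgf hfg) (PresentedGroup.of 0) = f X from rfl, hf0]
end
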